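/- arXiv:1204.2652 — 7 statements merged into one kernel-verified Lean document; each statement's English description precedes it below -/
import Mathlib

section
/- Let p(u) = Σ_{i=1}^k w_i u_i be a real linear form such that for all x, y ∈ {0,1}^k, setting u_i = x_i - y_i, we have p(u) ≥ 0 if and only if x ≥ y as binary integers with x_k, y_k the most significant bits (the GT function). Then w_1 > 0 and for all j ≥ 2, w_j ≥ 2^{j-2} · w_1. -/
/-- The integer represented in binary by `x : Fin k → Fin 2`, with `x i` having weight `2^i`
(so the last coordinate is the most significant bit). -/
def binVal {k : ℕ} (x : Fin k → Fin 2) : ℕ := ∑ i, (x i : ℕ) * 2 ^ (i : ℕ)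


lemma filt_sum {k : ℕ} {M : Type*} [AddCommMonoid M] (f : ℕ → M) (j : Fin k) :
    ∑ i ∈ Finset.univ.filter (fun i : Fin k => i < j), f (i : ℕ)
      = ∑ i ∈ Finset.range (j : ℕ), f i := by
  rw [Finset.sum_filter]
  simp only [Fin.lt_def]
  rw [Fin.sum_univ_eq_sum_range (fun i => if i < (j : ℕ) then f i else 0), ← Finset.sum_filter]
  congr 1
  ext i
  simp only [Finset.mem_filter, Finset.mem_range]
  exact ⟨fun h => h.2, fun h => ⟨h.trans j.isLt, h⟩⟩

lemma key (k : ℕ) (w : Fin k → ℝ)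
    (hrep : ∀ x y : Fin k → Fin 2,
      (0 ≤ ∑ i, w i * (((x i : ℕ) : ℝ) - ((y i : ℕ) : ℝ))) ↔ binVal y ≤ binVal x)
    (j : Fin k) :
    ∑ i ∈ Finset.univ.filter (fun i : Fin k => i < j), w i ≤ w j := by
  set x : Fin k → Fin 2 := fun i => if i = j then 1 else 0 with hx
  set y : Fin k → Fin 2 := fun i => if i < j then 1 else 0 with hy
  have hbx : binVal x = 2 ^ (j : ℕ) := by
    simp [binVal, hx, apply_ite (fun a : Fin 2 => (a : ℕ)), ite_mul, Finset.sum_ite_eq']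
  have hby : binVal y < 2 ^ (j : ℕ) := by
    have : binVal y = ∑ i ∈ Finset.range (j : ℕ), 2 ^ i := by
      rw [binVal, ← filt_sum (fun n => 2 ^ n) j, Finset.sum_filter]
      simp [hy, apply_ite (fun a : Fin 2 => (a : ℕ)), ite_mul]
    rw [this]
    exact Nat.geomSum_lt (le_refl 2) (by simp)
  have hs : (∑ i, w i * (((x i : ℕ) : ℝ) - ((y i : ℕ) : ℝ)))
      = w j - ∑ i ∈ Finset.univ.filter (fun i : Fin k => i < j), w i := by
    have h1 : (∑ i, w i * ((x i : ℕ) : ℝ)) = w j := by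
      simp [hx, apply_ite (fun a : Fin 2 => ((a : ℕ) : ℝ)), mul_ite, Finset.sum_ite_eq']
    have h2 : (∑ i, w i * ((y i : ℕ) : ℝ))
        = ∑ i ∈ Finset.univ.filter (fun i : Fin k => i < j), w i := by
      rw [Finset.sum_filter]
      simp [hy, apply_ite (fun a : Fin 2 => ((a : ℕ) : ℝ)), mul_ite]
    simp only [mul_sub, Finset.sum_sub_distrib, h1, h2]
  have := (hrep x y).mpr (by rw [hbx]; exact hby.le)
  linarith [hs ▸ this]

noncomputable def c : ℕ → ℝ := fun m => if m = 0 then 1 else 2 ^ (m - 1)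

lemma csum (m : ℕ) (hm : 1 ≤ m) : ∑ i ∈ Finset.range m, c i = 2 ^ (m - 1) := by
  induction m with
  | zero => omega
  | succ n ih =>
    by_cases hn : n = 0
    · subst hn; simp [c]
    · rw [Finset.sum_range_succ, ih (by omega)]
      have hc : c n = 2 ^ (n - 1) := by simp [c, hn]
      have he : n - 1 + 1 = n := by omega
      rw [hc, show n + 1 - 1 = n from rfl]
      have h2 : (2:ℝ) ^ (n - 1) + (2:ℝ) ^ (n - 1) = 2 ^ (n - 1 + 1) := by rw [pow_succ]; ring
      rw [h2, he]

/-- If `p(u) = Σ w_i u_i` sign-represents GT (via `u = x - y`), then `w_1 > 0` and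
`w_j ≥ 2^(j-2) w_1` for `j ≥ 2` (0-indexed: `w j ≥ 2^(j-1) w 0` for `j ≥ 1`). -/
theorem stmt1 (k : ℕ) (hk : 0 < k) (w : Fin k → ℝ)
    (hrep : ∀ x y : Fin k → Fin 2,
      (0 ≤ ∑ i, w i * (((x i : ℕ) : ℝ) - ((y i : ℕ) : ℝ))) ↔ binVal y ≤ binVal x) :
    0 < w ⟨0, hk⟩ ∧ ∀ j : Fin k, 1 ≤ (j : ℕ) → 2 ^ ((j : ℕ) - 1) * w ⟨0, hk⟩ ≤ w j := by
  set z : Fin k := ⟨0, hk⟩ with hz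
  have hw0 : 0 < w z := by
    set y : Fin k → Fin 2 := fun i => if i = z then 1 else 0 with hy
    have hby : binVal y = 1 := by
      simp [binVal, hy, hz, apply_ite (fun a : Fin 2 => (a : ℕ)), ite_mul, Finset.sum_ite_eq']
    have hbx : binVal (fun _ : Fin k => (0 : Fin 2)) = 0 := by simp [binVal]
    have h := hrep (fun _ => 0) y
    rw [hbx, hby] at h
    have hs : (∑ i, w i * ((((0 : Fin 2) : ℕ) : ℝ) - ((y i : ℕ) : ℝ))) = -w z := by
      simp [hy, apply_ite (fun a : Fin 2 => ((a : ℕ) : ℝ)), mul_ite, Finset.sum_ite_eq']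
    have := h.not.mpr (by omega)
    rw [hs] at this
    linarith
  have main : ∀ n : ℕ, ∀ j : Fin k, (j : ℕ) ≤ n → c (j : ℕ) * w z ≤ w j := by
    intro n
    induction n with
    | zero =>
      intro j hj
      have : j = z := Fin.ext (by simp [hz]; omega)
      subst this
      simp [c, hz]
    | succ n ih =>
      intro j hj
      by_cases h : (j : ℕ) ≤ n
      · exact ih j h
      · have hjv : (j : ℕ) = n + 1 := by omega
        have hb := key k w hrep j
        have hsum : ∑ i ∈ Finset.univ.filter (fun i : Fin k => i < j), c (i : ℕ) * w z
            ≤ ∑ i ∈ Finset.univ.filter (fun i : Fin k => i < j), w i := by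
          refine Finset.sum_le_sum fun i hi => ih i ?_
          have := (Finset.mem_filter.mp hi).2
          rw [Fin.lt_def] at this
          omega
        have heq : ∑ i ∈ Finset.univ.filter (fun i : Fin k => i < j), c (i : ℕ) * w z
            = 2 ^ ((j : ℕ) - 1) * w z := by
          rw [filt_sum (fun m => c m * w z) j, ← Finset.sum_mul, csum (j : ℕ) (by omega)]
        have hc : c (j : ℕ) = 2 ^ ((j : ℕ) - 1) := by simp [c]; omega
        rw [hc]
        linarith
  refine ⟨hw0, fun j hj => ?_⟩
  have := main (j : ℕ) j le_rfl
  have hc : c (j : ℕ) = 2 ^ ((j : ℕ) - 1) := by simp [c]; omega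
  rw [hc] at this
  exact this
end

section
/- Let p(u) = Σ_{i=1}^k w_i u_i be a linear form such that for all x, y ∈ {0,1}^k, p(x - y) ≥ 0 iff GT(x,y) = 1. Then for every j with 2 ≤ j ≤ k, w_j ≥ Σ_{i=1}^{j-1} w_i. -/
/-- If `p(u) = Σ w_i u_i` sign-represents GT (via `u = x - y`), then each weight dominates
the sum of all earlier weights: for `j ≥ 2` (0-indexed `j ≥ 1`), `w_j ≥ Σ_{i<j} w_i`. -/
theorem stmt2 (k : ℕ) (w : Fin k → ℝ)
    (hrep : ∀ x y : Fin k → Fin 2,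
      (0 ≤ ∑ i, w i * (((x i : ℕ) : ℝ) - ((y i : ℕ) : ℝ))) ↔ binVal y ≤ binVal x) :
    ∀ j : Fin k, 1 ≤ (j : ℕ) → ∑ i ∈ Finset.Iio j, w i ≤ w j := by
  intro j _
  set x : Fin k → Fin 2 := fun i => if i = j then 1 else 0 with hx
  set y : Fin k → Fin 2 := fun i => if i < j then 1 else 0 with hy
  have hfil : Finset.filter (fun i => i < j) Finset.univ = Finset.Iio j := by
    ext i; simp
  have hxv : binVal x = 2 ^ (j : ℕ) := by
    simp [binVal, hx, apply_ite (Fin.val), Finset.sum_ite_eq']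
  have hyv : binVal y = ∑ i ∈ Finset.Iio j, 2 ^ (i : ℕ) := by
    simp only [binVal, hy, apply_ite (Fin.val), Fin.val_one, Fin.val_zero, ite_mul,
      one_mul, zero_mul, Finset.sum_ite, Finset.sum_const_zero, add_zero, hfil]
  have hsum : (∑ i ∈ Finset.Iio j, 2 ^ (i : ℕ)) < 2 ^ (j : ℕ) := by
    have himg : (Finset.Iio j).image Fin.val = Finset.range (j : ℕ) := by
      ext n
      simp only [Finset.mem_image, Finset.mem_Iio, Finset.mem_range, Fin.lt_def]
      constructor
      · rintro ⟨i, hi, rfl⟩; exact hi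
      · intro hn; exact ⟨⟨n, lt_trans hn j.isLt⟩, hn, rfl⟩
    have := Finset.sum_image (g := Fin.val) (f := fun n => 2 ^ n) (s := Finset.Iio j)
      (fun a _ b _ h => Fin.val_injective h)
    rw [himg] at this
    rw [← this]
    have h2 := Nat.geomSum_eq (le_refl 2) (j : ℕ)
    have h3 : 0 < 2 ^ (j : ℕ) := Nat.pow_pos (by norm_num)
    omega
  have hle : binVal y ≤ binVal x := by rw [hxv, hyv]; omega
  have h := (hrep x y).mpr hle
  have heq : (∑ i, w i * (((x i : ℕ) : ℝ) - ((y i : ℕ) : ℝ)))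
      = w j - ∑ i ∈ Finset.Iio j, w i := by
    have key : ∀ i : Fin k, w i * (((x i : ℕ) : ℝ) - ((y i : ℕ) : ℝ))
        = (if i = j then w i else 0) - (if i < j then w i else 0) := by
      intro i
      rcases lt_trichotomy i j with h1 | h1 | h1
      · simp [hx, hy, h1, ne_of_lt h1]
      · simp [hx, hy, h1]
      · simp [hx, hy, h1.ne', not_lt_of_gt h1]
    rw [Finset.sum_congr rfl (fun i _ => key i), Finset.sum_sub_distrib,
      Finset.sum_ite_eq' Finset.univ j w, if_pos (Finset.mem_univ j),
      ← hfil, Finset.sum_filter]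
  rw [heq] at h
  linarith
end

section
/- Any linear threshold gate p(u) = Σ_{i=1}^k w_i u_i for GT (i.e., p(x-y) ≥ 0 iff GT(x,y)=1 for all x,y ∈ {0,1}^k) satisfies w_k ≥ 2^{k-2}, and hence the weight Σ|w_i| of any integer linear threshold gate for GT in the variables u_i = x_i - y_i is at least 2^{k-2}. -/
lemma geomSumAux : ∀ j : ℕ, ∑ n ∈ Finset.range j, 2 ^ n = 2 ^ j - 1 := by
  intro j
  induction j with
  | zero => simp
  | succ m ih =>
    rw [Finset.sum_range_succ, ih]
    have := Nat.one_le_two_pow (n := m)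
    omega

/-- Any integer linear threshold gate `Σ w_i u_i` for GT (with `u = x - y`) has top weight
`w_k ≥ 2^(k-2)`, hence total weight `Σ |w_i| ≥ 2^(k-2)`. -/
theorem stmt4 (k : ℕ) (hk : 2 ≤ k) (w : Fin k → ℤ)
    (hrep : ∀ x y : Fin k → Fin 2,
      (0 ≤ ∑ i, w i * (((x i : ℕ) : ℤ) - ((y i : ℕ) : ℤ))) ↔ binVal y ≤ binVal x) :
    2 ^ (k - 2) ≤ w ⟨k - 1, by omega⟩ ∧ 2 ^ (k - 2) ≤ ∑ i, |w i| := by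
  classical
  set W : ℕ → ℤ := fun n => if h : n < k then w ⟨n, h⟩ else 0 with hW
  have key : ∀ j, j < k → ∑ i ∈ Finset.range j, W i < W j := by
    intro j hj
    set x0 : Fin k → Fin 2 := fun i => if (i : ℕ) < j then 1 else 0 with hx0
    set y0 : Fin k → Fin 2 := fun i => if (i : ℕ) = j then 1 else 0 with hy0
    have h := hrep x0 y0
    have hbx : binVal x0 = ∑ n ∈ Finset.range j, 2 ^ n := by
      unfold binVal
      rw [hx0]
      rw [Fin.sum_univ_eq_sum_range
        (fun n => ((if n < j then (1 : Fin 2) else 0 : Fin 2) : ℕ) * 2 ^ n) k]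
      rw [← Finset.sum_subset (Finset.range_subset_range.2 (le_of_lt hj))]
      · exact Finset.sum_congr rfl fun n hn => by simp [Finset.mem_range.1 hn]
      · intro n _ hn
        rw [Finset.mem_range, not_lt] at hn
        simp [Nat.not_lt.mpr hn]
    have hby : binVal y0 = 2 ^ j := by
      unfold binVal
      rw [hy0]
      rw [Fin.sum_univ_eq_sum_range
        (fun n => ((if n = j then (1 : Fin 2) else 0 : Fin 2) : ℕ) * 2 ^ n) k]
      simp only [apply_ite (Fin.val), Fin.val_one, Fin.val_zero, ite_mul, one_mul, zero_mul]
      rw [Finset.sum_ite_eq' (Finset.range k) j (fun n => 2 ^ n)]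
      simp [Finset.mem_range.2 hj]
    have hsum : ∑ i : Fin k, w i * (((x0 i : ℕ) : ℤ) - ((y0 i : ℕ) : ℤ)) =
        (∑ i ∈ Finset.range j, W i) - W j := by
      have hpt : ∀ i : Fin k, w i * (((x0 i : ℕ) : ℤ) - ((y0 i : ℕ) : ℤ)) =
          (if (i : ℕ) < j then W i else 0) - (if (i : ℕ) = j then W i else 0) := by
        intro i
        have hwi : W (i : ℕ) = w i := by simp [hW, i.isLt]
        rw [hx0, hy0]
        by_cases h1 : (i : ℕ) < j <;> by_cases h2 : (i : ℕ) = j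
        · omega
        · simp [h1, h2, hwi]
        · subst h2; simp [h1, hwi]
        · simp [h1, h2]
      rw [Finset.sum_congr rfl fun i _ => hpt i, Finset.sum_sub_distrib]
      congr 1
      · rw [Fin.sum_univ_eq_sum_range (fun n => if n < j then W n else 0) k]
        rw [← Finset.sum_subset (Finset.range_subset_range.2 (le_of_lt hj))]
        · exact Finset.sum_congr rfl fun n hn => by simp [Finset.mem_range.1 hn]
        · intro n _ hn
          rw [Finset.mem_range, not_lt] at hn
          simp [Nat.not_lt.mpr hn]
      · rw [Fin.sum_univ_eq_sum_range (fun n => if n = j then W n else 0) k]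
        rw [Finset.sum_ite_eq' (Finset.range k) j W]
        simp [Finset.mem_range.2 hj]
    rw [hsum, hbx, hby] at h
    have hlt : ¬ ((2 : ℕ) ^ j ≤ ∑ n ∈ Finset.range j, 2 ^ n) := by
      rw [geomSumAux j]
      have : 1 ≤ 2 ^ j := Nat.one_le_two_pow
      omega
    have := (not_iff_not.mpr h).mpr hlt
    omega
  have hS : ∀ j, j ≤ k → (2 : ℤ) ^ j - 1 ≤ ∑ i ∈ Finset.range j, W i := by
    intro j
    induction j with
    | zero => simp
    | succ m ih =>
      intro hm
      have h1 := ih (by omega)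
      have h2 := key m (by omega)
      rw [Finset.sum_range_succ]
      have h3 : (2 : ℤ) ^ (m + 1) = 2 * 2 ^ m := by ring
      omega
  have hwk : (2 : ℤ) ^ (k - 1) ≤ W (k - 1) := by
    have h1 := hS (k - 1) (by omega)
    have h2 := key (k - 1) (by omega)
    omega
  have hWk : W (k - 1) = w ⟨k - 1, by omega⟩ := by
    simp [hW, Nat.sub_lt (by omega : 0 < k) one_pos]
  have hpow : (2 : ℤ) ^ (k - 2) ≤ 2 ^ (k - 1) :=
    pow_le_pow_right₀ (by norm_num) (by omega)
  have hmain : (2 : ℤ) ^ (k - 2) ≤ w ⟨k - 1, by omega⟩ := by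
    rw [← hWk]; omega
  refine ⟨hmain, le_trans hmain ?_⟩
  refine le_trans (le_abs_self _) ?_
  exact Finset.single_le_sum (f := fun i => |w i|) (fun i _ => abs_nonneg _) (Finset.mem_univ _)
end

section
/- Let f be the function of Definition (the d-dimensional GT generalization) on variables (x^1,...,x^d,y^1,...,y^d) with x^i, y^i ∈ {0,1}^{k_i}. Then f has a threshold gate of degree d, namely p(x,y) = Σ_{j=1}^{|K|} 2^j t_j where t_j = Π_{i=1}^d (x^i_{α^j_i} - y^i_{α^j_i}) and α^1 < α^2 < ... < α^{|K|} enumerates the index set K = [k_1]×...×[k_d] in the specified order: f(x,y) = sgn(p(x,y)) for all inputs. -/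
/-- Parity state of the snake order: which of the two orderings (`<₁` if the value is `1`,
`<₀` otherwise) is used to compare the `l`-th coordinates (0-indexed coordinates, 1-based
coordinate values `α l ∈ {1,...,k l}`). The first coordinate uses `<₁`, and coordinate
`l+1` uses `<₀` iff the ordinal number of `α l` w.r.t. its ordering is even. -/
def snakePar (k α : ℕ → ℕ) : ℕ → ℕ
  | 0 => 1
  | l + 1 => (if snakePar k α l = 1 then α l else k l + 1 - α l) % 2

/-- The ordinal number of the `l`-th coordinate of `α` w.r.t. the ordering associated to it
by the snake order. -/
def snakeNum (k α : ℕ → ℕ) (l : ℕ) : ℕ :=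
  if snakePar k α l = 1 then α l else k l + 1 - α l

/-- The snake (recursive lexicographic) strict order on `d`-tuples. -/
def snakeLt (d : ℕ) (k α β : ℕ → ℕ) : Prop :=
  ∃ l < d, (∀ m < l, snakeNum k α m = snakeNum k β m) ∧ snakeNum k α l < snakeNum k β l

/-- Extension of a `d`-tuple to a function on `ℕ` (by `0`). -/
def extFun {d : ℕ} (f : Fin d → ℕ) : ℕ → ℕ := fun l => if h : l < d then f ⟨l, h⟩ else 0

/-- The index set `K = [k_1] × ... × [k_d]` (values are 1-based). -/
def snakeK {d : ℕ} (k : Fin d → ℕ) : Finset (Fin d → ℕ) :=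
  Fintype.piFinset fun i => Finset.Icc 1 (k i)

/-- The product `Π_i (x^i_{α_i} - y^i_{α_i})`. -/
def tProd {d : ℕ} (x y : Fin d → ℕ → ℤ) (α : Fin d → ℕ) : ℤ :=
  ∏ i, (x i (α i) - y i (α i))

/-- Inputs with all (relevant) coordinates in `{0,1}`. -/
def Bool01 {d : ℕ} (x : Fin d → ℕ → ℤ) : Prop := ∀ i j, x i j = 0 ∨ x i j = 1

/-- `f` is the `d`-dimensional generalization of GT: on inputs `x, y` it equals the sign of
`Π_i (x^i_{α_i} - y^i_{α_i})` for the snake-largest `α ∈ K` making this product nonzero,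
and `1` if there is no such `α` (sign convention: `sgn t = 1` if `t ≥ 0`, else `0`). -/
def IsSnakeGT {d : ℕ} (k : Fin d → ℕ)
    (f : (Fin d → ℕ → ℤ) → (Fin d → ℕ → ℤ) → ℤ) : Prop :=
  ∀ x y : Fin d → ℕ → ℤ, Bool01 x → Bool01 y →
    ((∀ α ∈ snakeK k, tProd x y α = 0) → f x y = 1) ∧
    (∀ α ∈ snakeK k, tProd x y α ≠ 0 →
      (∀ β ∈ snakeK k, snakeLt d (extFun k) (extFun α) (extFun β) → tProd x y β = 0) →
      f x y = if 0 < tProd x y α then 1 else 0)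

open Classical in
/-- The rank (1-based ordinal number) of `α` in `K` w.r.t. the snake order. -/
noncomputable def snakeRank {d : ℕ} (k : Fin d → ℕ) (α : Fin d → ℕ) : ℕ :=
  ((snakeK k).filter fun β => β = α ∨ snakeLt d (extFun k) (extFun β) (extFun α)).card


namespace Stmt13Aux

lemma snakePar_succ (k a : ℕ → ℕ) (l : ℕ) :
    snakePar k a (l + 1) = snakeNum k a l % 2 := rfl

lemma snakePar_congr (k a b : ℕ → ℕ) (l : ℕ)
    (h : ∀ m < l, snakeNum k a m = snakeNum k b m) :
    snakePar k a l = snakePar k b l := by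
  cases l with
  | zero => rfl
  | succ l => rw [snakePar_succ, snakePar_succ, h l (Nat.lt_succ_self l)]

lemma coord_eq (k a b : ℕ → ℕ) (l : ℕ)
    (ha : 1 ≤ a l ∧ a l ≤ k l) (hb : 1 ≤ b l ∧ b l ≤ k l)
    (hpar : snakePar k a l = snakePar k b l)
    (hnum : snakeNum k a l = snakeNum k b l) : a l = b l := by
  unfold snakeNum at hnum
  rw [hpar] at hnum
  split at hnum <;> omega

lemma eq_of_num_eq (d : ℕ) (k a b : ℕ → ℕ)
    (ha : ∀ m < d, 1 ≤ a m ∧ a m ≤ k m) (hb : ∀ m < d, 1 ≤ b m ∧ b m ≤ k m)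
    (h : ∀ m < d, snakeNum k a m = snakeNum k b m) : ∀ m < d, a m = b m := by
  intro m hm
  exact coord_eq k a b m (ha m hm) (hb m hm)
    (snakePar_congr k a b m (fun j hj => h j (hj.trans hm))) (h m hm)

lemma snake_trichotomy (d : ℕ) (k a b : ℕ → ℕ)
    (ha : ∀ m < d, 1 ≤ a m ∧ a m ≤ k m) (hb : ∀ m < d, 1 ≤ b m ∧ b m ≤ k m) :
    snakeLt d k a b ∨ snakeLt d k b a ∨ ∀ m < d, a m = b m := by
  by_cases h : ∀ m < d, snakeNum k a m = snakeNum k b m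
  · exact Or.inr (Or.inr (eq_of_num_eq d k a b ha hb h))
  · push_neg at h
    have hex : ∃ l, l < d ∧ snakeNum k a l ≠ snakeNum k b l := by
      obtain ⟨l, hl, hne⟩ := h; exact ⟨l, hl, hne⟩
    classical
    have hld := (Nat.find_spec hex).1
    have hne := (Nat.find_spec hex).2
    have hmin : ∀ m < Nat.find hex, snakeNum k a m = snakeNum k b m := by
      intro m hm
      by_contra hc
      exact Nat.find_min hex hm ⟨hm.trans hld, hc⟩
    rcases Nat.lt_or_ge (snakeNum k a (Nat.find hex)) (snakeNum k b (Nat.find hex))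
      with hlt | hge
    · exact Or.inl ⟨Nat.find hex, hld, hmin, hlt⟩
    · refine Or.inr (Or.inl ⟨Nat.find hex, hld, fun m hm => (hmin m hm).symm, ?_⟩)
      omega

lemma snake_irrefl (d : ℕ) (k a : ℕ → ℕ) : ¬ snakeLt d k a a := by
  rintro ⟨l, _, _, hlt⟩; omega

lemma snake_asymm (d : ℕ) (k a b : ℕ → ℕ)
    (h1 : snakeLt d k a b) (h2 : snakeLt d k b a) : False := by
  obtain ⟨l1, _, he1, hlt1⟩ := h1
  obtain ⟨l2, _, he2, hlt2⟩ := h2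
  rcases lt_trichotomy l1 l2 with h | h | h
  · have := he2 l1 h; omega
  · subst h; omega
  · have := he1 l2 h; omega

lemma snake_trans (d : ℕ) (k a b c : ℕ → ℕ)
    (h1 : snakeLt d k a b) (h2 : snakeLt d k b c) : snakeLt d k a c := by
  obtain ⟨l1, hl1, he1, hlt1⟩ := h1
  obtain ⟨l2, hl2, he2, hlt2⟩ := h2
  refine ⟨min l1 l2, by omega, fun m hm => ?_, ?_⟩
  · rw [he1 m (by omega), he2 m (by omega)]
  · rcases lt_trichotomy l1 l2 with h | h | h
    · have h2' := he2 l1 h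
      have hm : min l1 l2 = l1 := by omega
      rw [hm]; omega
    · subst h
      have hm : min l1 l1 = l1 := by omega
      rw [hm]; omega
    · have h1' := he1 l2 h
      have hm : min l1 l2 = l2 := by omega
      rw [hm]; omega

lemma mem_bounds {d : ℕ} {k : Fin d → ℕ} {α : Fin d → ℕ} (hα : α ∈ snakeK k) :
    ∀ m < d, 1 ≤ extFun α m ∧ extFun α m ≤ extFun k m := by
  intro m hm
  rw [snakeK, Fintype.mem_piFinset] at hα
  have := hα ⟨m, hm⟩
  rw [Finset.mem_Icc] at this
  simp only [extFun, dif_pos hm]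
  exact this

lemma ext_eq {d : ℕ} {α β : Fin d → ℕ} (h : ∀ m < d, extFun α m = extFun β m) :
    α = β := by
  funext i
  have := h i.1 i.2
  simpa only [extFun, dif_pos i.2] using this

lemma rank_lt {d : ℕ} {k : Fin d → ℕ} {α β : Fin d → ℕ}
    (hα : α ∈ snakeK k) (hβ : β ∈ snakeK k)
    (h : snakeLt d (extFun k) (extFun α) (extFun β)) :
    snakeRank k α < snakeRank k β := by
  classical
  apply Finset.card_lt_card
  rw [Finset.ssubset_iff_of_subset]
  · refine ⟨β, Finset.mem_filter.mpr ⟨hβ, Or.inl rfl⟩, ?_⟩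
    rw [Finset.mem_filter]
    rintro ⟨-, rfl | h2⟩
    · exact snake_irrefl d _ _ h
    · exact snake_asymm d _ _ _ h h2
  · intro γ hγ
    rw [Finset.mem_filter] at hγ ⊢
    refine ⟨hγ.1, Or.inr ?_⟩
    rcases hγ.2 with rfl | h2
    · exact h
    · exact snake_trans d _ _ _ _ h2 h

lemma geom (n : ℕ) : ∑ i ∈ Finset.range n, (2 : ℤ) ^ i = 2 ^ n - 1 := by
  induction n with
  | zero => simp
  | succ n ih => rw [Finset.sum_range_succ, ih]; ring

lemma sum_bound {X : Type*} [DecidableEq X] (s : Finset X) (r : X → ℕ) (n : ℕ)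
    (hinj : ∀ x ∈ s, ∀ y ∈ s, r x = r y → x = y) (hlt : ∀ x ∈ s, r x < n) :
    ∑ x ∈ s, (2 : ℤ) ^ r x ≤ 2 ^ n - 1 := by
  have h1 : ∑ i ∈ s.image r, (2 : ℤ) ^ i = ∑ x ∈ s, (2 : ℤ) ^ r x :=
    Finset.sum_image hinj
  rw [← h1, ← geom n]
  apply Finset.sum_le_sum_of_subset_of_nonneg
  · intro i hi
    rw [Finset.mem_image] at hi
    obtain ⟨x, hx, rfl⟩ := hi
    exact Finset.mem_range.mpr (hlt x hx)
  · intro i _ _; positivity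

lemma tProd_abs_le {d : ℕ} {x y : Fin d → ℕ → ℤ} (hx : Bool01 x) (hy : Bool01 y)
    (α : Fin d → ℕ) : |tProd x y α| ≤ 1 := by
  rw [tProd, Finset.abs_prod]
  apply Finset.prod_le_one
  · intro i _; positivity
  · intro i _
    rcases hx i (α i) with h1 | h1 <;> rcases hy i (α i) with h2 | h2 <;>
      rw [h1, h2] <;> norm_num

end Stmt13Aux

/-- The `d`-dimensional GT generalization `f` has a threshold gate of degree `d`, namely
`p(x,y) = Σ_{α ∈ K} 2^{rank α} · Π_i (x^i_{α_i} - y^i_{α_i})` where `rank` enumerates `K`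
in the snake order: `f(x,y) = sgn p(x,y)` for all inputs. -/
theorem stmt13 (d : ℕ) (k : Fin d → ℕ)
    (f : (Fin d → ℕ → ℤ) → (Fin d → ℕ → ℤ) → ℤ) (hf : IsSnakeGT k f) :
    ∀ x y : Fin d → ℕ → ℤ, Bool01 x → Bool01 y →
      (f x y = 1 ↔ 0 ≤ ∑ α ∈ snakeK k, (2 : ℤ) ^ snakeRank k α * tProd x y α) := by
  intro x y hx hy
  classical
  obtain ⟨h0, h1⟩ := hf x y hx hy
  by_cases hall : ∀ α ∈ snakeK k, tProd x y α = 0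
  · have hsum : ∑ α ∈ snakeK k, (2 : ℤ) ^ snakeRank k α * tProd x y α = 0 :=
      Finset.sum_eq_zero fun α hα => by rw [hall α hα, mul_zero]
    rw [hsum, h0 hall]
    norm_num
  · push_neg at hall
    set s := (snakeK k).filter (fun γ => tProd x y γ ≠ 0) with hs
    have hsne : s.Nonempty := by
      obtain ⟨α, hα, hne⟩ := hall; exact ⟨α, Finset.mem_filter.mpr ⟨hα, hne⟩⟩
    obtain ⟨α, hαs, hαmax⟩ := Finset.exists_max_image s (snakeRank k) hsne
    rw [hs, Finset.mem_filter] at hαs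
    obtain ⟨hαK, hαne⟩ := hαs
    have hmax' : ∀ β ∈ snakeK k,
        snakeLt d (extFun k) (extFun α) (extFun β) → tProd x y β = 0 := by
      intro β hβ hlt
      by_contra hc
      have hβs : β ∈ s := Finset.mem_filter.mpr ⟨hβ, hc⟩
      have h2 := hαmax β hβs
      have h3 := Stmt13Aux.rank_lt hαK hβ hlt
      omega
    have hfv := h1 α hαK hαne hmax'
    have hsplit : ∑ γ ∈ snakeK k, (2 : ℤ) ^ snakeRank k γ * tProd x y γ
        = 2 ^ snakeRank k α * tProd x y α
          + ∑ γ ∈ (snakeK k).erase α, (2 : ℤ) ^ snakeRank k γ * tProd x y γ :=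
      (Finset.add_sum_erase _ _ hαK).symm
    set A := (((snakeK k).erase α).filter fun γ => tProd x y γ ≠ 0) with hA
    have hAsum : ∑ γ ∈ A, (2 : ℤ) ^ snakeRank k γ * tProd x y γ
        = ∑ γ ∈ (snakeK k).erase α, (2 : ℤ) ^ snakeRank k γ * tProd x y γ :=
      Finset.sum_filter_of_ne (fun γ _ h => right_ne_zero_of_mul h)
    have hAmem : ∀ γ ∈ A, γ ∈ snakeK k ∧ γ ≠ α ∧ tProd x y γ ≠ 0 := by
      intro γ hγ
      rw [hA, Finset.mem_filter, Finset.mem_erase] at hγ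
      exact ⟨hγ.1.2, hγ.1.1, hγ.2⟩
    have hArank : ∀ γ ∈ A, snakeRank k γ < snakeRank k α := by
      intro γ hγ
      obtain ⟨hγK, hγne, hγt⟩ := hAmem γ hγ
      rcases Stmt13Aux.snake_trichotomy d (extFun k) (extFun γ) (extFun α)
        (Stmt13Aux.mem_bounds hγK) (Stmt13Aux.mem_bounds hαK) with h | h | h
      · exact Stmt13Aux.rank_lt hγK hαK h
      · exact absurd (hmax' γ hγK h) hγt
      · exact absurd (Stmt13Aux.ext_eq h) hγne
    have hAinj : ∀ γ ∈ A, ∀ δ ∈ A, snakeRank k γ = snakeRank k δ → γ = δ := by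
      intro γ hγ δ hδ heq
      obtain ⟨hγK, -, -⟩ := hAmem γ hγ
      obtain ⟨hδK, -, -⟩ := hAmem δ hδ
      rcases Stmt13Aux.snake_trichotomy d (extFun k) (extFun γ) (extFun δ)
        (Stmt13Aux.mem_bounds hγK) (Stmt13Aux.mem_bounds hδK) with h | h | h
      · exact absurd heq (Nat.ne_of_lt (Stmt13Aux.rank_lt hγK hδK h))
      · exact absurd heq.symm (Nat.ne_of_lt (Stmt13Aux.rank_lt hδK hγK h))
      · exact Stmt13Aux.ext_eq h
    have hbound : |∑ γ ∈ A, (2 : ℤ) ^ snakeRank k γ * tProd x y γ|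
        ≤ 2 ^ snakeRank k α - 1 := by
      calc |∑ γ ∈ A, (2 : ℤ) ^ snakeRank k γ * tProd x y γ|
          ≤ ∑ γ ∈ A, |(2 : ℤ) ^ snakeRank k γ * tProd x y γ| :=
            Finset.abs_sum_le_sum_abs _ _
        _ ≤ ∑ γ ∈ A, (2 : ℤ) ^ snakeRank k γ := by
            apply Finset.sum_le_sum
            intro γ hγ
            rw [abs_mul, abs_pow, abs_two]
            have h2 := Stmt13Aux.tProd_abs_le hx hy γ
            have h3 : (0 : ℤ) ≤ 2 ^ snakeRank k γ := by positivity
            nlinarith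
        _ ≤ 2 ^ snakeRank k α - 1 := Stmt13Aux.sum_bound A _ _ hAinj hArank
    have habs := abs_le.mp hbound
    have h1n : (1 : ℤ) ≤ 2 ^ snakeRank k α := by
      exact_mod_cast Nat.one_le_two_pow
    have htval : tProd x y α = 1 ∨ tProd x y α = -1 := by
      have := abs_le.mp (Stmt13Aux.tProd_abs_le hx hy α)
      omega
    rcases htval with htα | htα
    · have hfeq : f x y = 1 := by rw [hfv, htα]; norm_num
      have hge : 0 ≤ ∑ γ ∈ snakeK k, (2 : ℤ) ^ snakeRank k γ * tProd x y γ := by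
        rw [hsplit, htα, mul_one, ← hAsum]
        linarith [habs.1]
      simp [hfeq, hge]
    · have hfeq : f x y = 0 := by rw [hfv, htα]; norm_num
      have hlt : ¬ (0 ≤ ∑ γ ∈ snakeK k, (2 : ℤ) ^ snakeRank k γ * tProd x y γ) := by
        rw [hsplit, htα, ← hAsum]
        push_neg
        linarith [habs.2]
      rw [hfeq]
      constructor
      · intro h; norm_num at h
      · intro h; exact absurd h hlt
end

section
/- Let p be a polynomial of degree at most d that sign-represents a function f: {-1,1}^{2m} → {-1,1} such that, for each i ∈ [d], negating a certain group u^i of its variables (keeping all others fixed) negates f on a subset I of inputs on which f is never 0, and such that outside I all variables in some group u^i vanish and f = 1. Then the polynomial q obtained from p by deleting every monomial that does not contain exactly one variable from each group u^1,...,u^d (and no variables outside these groups) also sign-represents f, and W(q) ≤ W(p). -/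
open MvPolynomial

/-- The weight of a polynomial: sum of absolute values of its coefficients. -/
noncomputable def wt {σ : Type*} (p : MvPolynomial σ ℤ) : ℤ :=
  ∑ m ∈ p.support, |p.coeff m|

/-- Negate the variables of the group `G` in the input `z`. -/
def negOn {σ : Type*} [DecidableEq σ] (G : Finset σ) (z : σ → ℤ) : σ → ℤ :=
  fun w => if w ∈ G then -z w else z w

set_option maxHeartbeats 1000000

lemma negOn_empty {σ : Type*} [DecidableEq σ] (z : σ → ℤ) : negOn ∅ z = z := by
  funext w; simp [negOn]

lemma negOn_union {σ : Type*} [DecidableEq σ] (A B : Finset σ) (h : Disjoint A B) (z : σ → ℤ) :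
    negOn (A ∪ B) z = negOn A (negOn B z) := by
  funext w
  unfold negOn
  by_cases hA : w ∈ A <;> by_cases hB : w ∈ B <;>
    simp [hA, hB, Finset.mem_union]
  exact absurd hB (Finset.disjoint_left.mp h hA)

lemma prod_negOn {σ : Type*} [DecidableEq σ] (A : Finset σ) (z : σ → ℤ) (μ : σ →₀ ℕ) :
    ∏ w ∈ μ.support, (negOn A z w) ^ μ w
      = (-1:ℤ) ^ (∑ w ∈ A, μ w) * ∏ w ∈ μ.support, z w ^ μ w := by
  have h1 : ∀ w, negOn A z w = (if w ∈ A then (-1:ℤ) else 1) * z w := by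
    intro w; unfold negOn; split <;> ring
  calc ∏ w ∈ μ.support, (negOn A z w) ^ μ w
      = ∏ w ∈ μ.support, ((if w ∈ A then (-1:ℤ) else 1) ^ μ w * z w ^ μ w) := by
        refine Finset.prod_congr rfl fun w _ => ?_
        rw [h1, mul_pow]
    _ = (∏ w ∈ μ.support, (if w ∈ A then (-1:ℤ) else 1) ^ μ w)
          * ∏ w ∈ μ.support, z w ^ μ w := Finset.prod_mul_distrib
    _ = (-1:ℤ) ^ (∑ w ∈ A, μ w) * ∏ w ∈ μ.support, z w ^ μ w := by
        congr 1
        have e1 : ∀ w ∈ μ.support, (if w ∈ A then (-1:ℤ) else 1) ^ μ w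
            = if w ∈ A then (-1:ℤ) ^ μ w else 1 := by
          intro w _; split <;> simp
        rw [Finset.prod_congr rfl e1, Finset.prod_ite, Finset.prod_const_one, mul_one,
          Finset.prod_pow_eq_pow_sum]
        congr 1
        rw [Finset.filter_mem_eq_inter]
        refine Finset.sum_subset Finset.inter_subset_right fun w hw hnw => ?_
        have : w ∉ μ.support := fun hs => hnw (Finset.mem_inter.mpr ⟨hs, hw⟩)
        simpa using Finsupp.notMem_support_iff.mp this

lemma eval_negOn {σ : Type*} [DecidableEq σ] (A : Finset σ) (z : σ → ℤ) (p : MvPolynomial σ ℤ) :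
    eval (negOn A z) p
      = ∑ μ ∈ p.support, (-1:ℤ) ^ (∑ w ∈ A, μ w) * (p.coeff μ * ∏ w ∈ μ.support, z w ^ μ w) := by
  rw [eval_eq]
  refine Finset.sum_congr rfl fun μ _ => ?_
  rw [prod_negOn]; ring

lemma signed_sum {σ : Type*} [DecidableEq σ] {d : ℕ} (G : Fin d → Finset σ)
    (hdisj : ∀ i j, i ≠ j → Disjoint (G i) (G j)) (μ : σ →₀ ℕ) :
    ∑ S ∈ (Finset.univ : Finset (Fin d)).powerset,
        (-1:ℤ) ^ S.card * (-1:ℤ) ^ (∑ w ∈ S.biUnion G, μ w)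
      = ∏ i, (1 - (-1:ℤ) ^ (∑ w ∈ G i, μ w)) := by
  have key : ∀ S : Finset (Fin d),
      (-1:ℤ) ^ S.card * (-1:ℤ) ^ (∑ w ∈ S.biUnion G, μ w)
        = ∏ i ∈ S, (-(-1:ℤ) ^ (∑ w ∈ G i, μ w)) := by
    intro S
    have hbi : ∑ w ∈ S.biUnion G, μ w = ∑ i ∈ S, ∑ w ∈ G i, μ w := by
      refine Finset.sum_biUnion ?_
      intro i _ j _ hij
      exact hdisj i j hij
    have : ∀ i ∈ S, -(-1:ℤ) ^ (∑ w ∈ G i, μ w) = (-1) * (-1:ℤ) ^ (∑ w ∈ G i, μ w) := by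
      intro i _; ring
    rw [hbi, Finset.prod_congr rfl this, Finset.prod_mul_distrib, Finset.prod_const,
      Finset.prod_pow_eq_pow_sum]
  rw [Finset.sum_congr rfl fun S _ => key S]
  have := Finset.prod_add (fun i : Fin d => -(-1:ℤ) ^ (∑ w ∈ G i, μ w)) (fun _ => 1)
      Finset.univ
  simp only [Finset.prod_const_one, mul_one] at this
  rw [← this]
  refine Finset.prod_congr rfl fun i _ => ?_
  ring

lemma prod_one_sub_pow {d : ℕ} (a : Fin d → ℕ) :
    ∏ i, (1 - (-1:ℤ) ^ (a i)) = if ∀ i, Odd (a i) then (2:ℤ) ^ d else 0 := by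
  split
  case isTrue h =>
    have : ∀ i ∈ Finset.univ, (1 - (-1:ℤ) ^ (a i)) = 2 := by
      intro i _
      rw [(h i).neg_one_pow]; ring
    rw [Finset.prod_congr rfl this, Finset.prod_const, Finset.card_univ, Fintype.card_fin]
  case isFalse h =>
    push_neg at h
    obtain ⟨i, hi⟩ := h
    refine Finset.prod_eq_zero (Finset.mem_univ i) ?_
    rw [Nat.not_odd_iff_even] at hi
    rw [hi.neg_one_pow]; ring

lemma cond_iff_odd {σ : Type*} [DecidableEq σ] {d : ℕ} (G : Fin d → Finset σ)
    (hdisj : ∀ i j, i ≠ j → Disjoint (G i) (G j)) (μ : σ →₀ ℕ)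
    (hdeg : ∑ w ∈ μ.support, μ w ≤ d) :
    ((∀ w ∈ μ.support, ∃ i, w ∈ G i) ∧ ∀ i, ∑ w ∈ G i, μ w = 1)
      ↔ ∀ i, Odd (∑ w ∈ G i, μ w) := by
  constructor
  · rintro ⟨-, h1⟩ i
    rw [h1 i]; exact odd_one
  · intro hodd
    set B := Finset.univ.biUnion G with hB
    have hsumB : ∑ w ∈ B, μ w = ∑ i, ∑ w ∈ G i, μ w := by
      refine Finset.sum_biUnion ?_
      intro i _ j _ hij
      exact hdisj i j hij
    have hge : ∀ i : Fin d, 1 ≤ ∑ w ∈ G i, μ w := fun i => (hodd i).pos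
    have hlow : d ≤ ∑ i, ∑ w ∈ G i, μ w := by
      calc d = ∑ _i : Fin d, 1 := by simp
        _ ≤ _ := Finset.sum_le_sum fun i _ => hge i
    have hBsup : ∑ w ∈ B, μ w = ∑ w ∈ μ.support ∩ B, μ w := by
      rw [Finset.inter_comm]
      refine (Finset.sum_subset Finset.inter_subset_left fun w hw hnw => ?_).symm
      have : w ∉ μ.support := fun hs => hnw (Finset.mem_inter.mpr ⟨hw, hs⟩)
      simpa using Finsupp.notMem_support_iff.mp this
    have hsplit : ∑ w ∈ μ.support ∩ B, μ w + ∑ w ∈ μ.support \ B, μ w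
        = ∑ w ∈ μ.support, μ w := Finset.sum_inter_add_sum_sdiff _ _ _
    -- everything is squeezed
    have hup : ∑ i, ∑ w ∈ G i, μ w ≤ d := by
      calc ∑ i, ∑ w ∈ G i, μ w = ∑ w ∈ μ.support ∩ B, μ w := by rw [← hsumB, hBsup]
        _ ≤ ∑ w ∈ μ.support, μ w := by omega
        _ ≤ d := hdeg
    have heq : ∑ i, ∑ w ∈ G i, μ w = d := le_antisymm hup hlow
    have hdiff0 : ∑ w ∈ μ.support \ B, μ w = 0 := by omega
    constructor
    · intro w hw
      have hwB : w ∈ B := by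
        by_contra hwB
        have : μ w = 0 := by
          have := Finset.sum_eq_zero_iff.mp hdiff0 w (Finset.mem_sdiff.mpr ⟨hw, hwB⟩)
          exact this
        exact Finsupp.mem_support_iff.mp hw this
      obtain ⟨i, _, hi⟩ := Finset.mem_biUnion.mp hwB
      exact ⟨i, hi⟩
    · intro i
      have : ∑ i : Fin d, (1:ℕ) = ∑ i, ∑ w ∈ G i, μ w := by
        rw [heq]; simp
      exact ((Finset.sum_eq_sum_iff_of_le fun i _ => hge i).mp this i (Finset.mem_univ i)).symm

lemma key_identity {σ : Type*} [DecidableEq σ] {d : ℕ} (G : Fin d → Finset σ)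
    (hdisj : ∀ i j, i ≠ j → Disjoint (G i) (G j))
    (p : MvPolynomial σ ℤ) (hdeg : p.totalDegree ≤ d)
    (q : MvPolynomial σ ℤ)
    (hq : q = ∑ μ ∈ p.support.filter
        (fun μ => (∀ w ∈ μ.support, ∃ i, w ∈ G i) ∧ ∀ i, ∑ w ∈ G i, μ w = 1),
      monomial μ (p.coeff μ)) (z : σ → ℤ) :
    ∑ S ∈ (Finset.univ : Finset (Fin d)).powerset,
        (-1:ℤ) ^ S.card * eval (negOn (S.biUnion G) z) p
      = (2:ℤ) ^ d * eval z q := by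
  classical
  have step1 : ∑ S ∈ (Finset.univ : Finset (Fin d)).powerset,
      (-1:ℤ) ^ S.card * eval (negOn (S.biUnion G) z) p
      = ∑ μ ∈ p.support,
          (∑ S ∈ (Finset.univ : Finset (Fin d)).powerset,
            (-1:ℤ) ^ S.card * (-1:ℤ) ^ (∑ w ∈ S.biUnion G, μ w))
          * (p.coeff μ * ∏ w ∈ μ.support, z w ^ μ w) := by
    calc ∑ S ∈ (Finset.univ : Finset (Fin d)).powerset,
        (-1:ℤ) ^ S.card * eval (negOn (S.biUnion G) z) p
        = ∑ S ∈ (Finset.univ : Finset (Fin d)).powerset, ∑ μ ∈ p.support,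
            (-1:ℤ) ^ S.card * (-1:ℤ) ^ (∑ w ∈ S.biUnion G, μ w)
              * (p.coeff μ * ∏ w ∈ μ.support, z w ^ μ w) := by
          refine Finset.sum_congr rfl fun S _ => ?_
          rw [eval_negOn, Finset.mul_sum]
          exact Finset.sum_congr rfl fun μ _ => by ring
      _ = ∑ μ ∈ p.support, ∑ S ∈ (Finset.univ : Finset (Fin d)).powerset,
            (-1:ℤ) ^ S.card * (-1:ℤ) ^ (∑ w ∈ S.biUnion G, μ w)
              * (p.coeff μ * ∏ w ∈ μ.support, z w ^ μ w) := Finset.sum_comm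
      _ = _ := by
          refine Finset.sum_congr rfl fun μ _ => ?_
          rw [Finset.sum_mul]
  rw [step1]
  have step2 : ∀ μ ∈ p.support,
      (∑ S ∈ (Finset.univ : Finset (Fin d)).powerset,
        (-1:ℤ) ^ S.card * (-1:ℤ) ^ (∑ w ∈ S.biUnion G, μ w))
        * (p.coeff μ * ∏ w ∈ μ.support, z w ^ μ w)
      = (if (∀ w ∈ μ.support, ∃ i, w ∈ G i) ∧ ∀ i, ∑ w ∈ G i, μ w = 1
          then (2:ℤ)^d else 0) * (p.coeff μ * ∏ w ∈ μ.support, z w ^ μ w) := by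
    intro μ hμ
    have hdegμ : ∑ w ∈ μ.support, μ w ≤ d := by
      refine le_trans ?_ hdeg
      exact MvPolynomial.le_totalDegree hμ
    rw [signed_sum G hdisj μ, prod_one_sub_pow]
    congr 2
    simp only [eq_iff_iff]
    exact (cond_iff_odd G hdisj μ hdegμ).symm
  rw [Finset.sum_congr rfl step2]
  have step3 : eval z q = ∑ μ ∈ p.support.filter
      (fun μ => (∀ w ∈ μ.support, ∃ i, w ∈ G i) ∧ ∀ i, ∑ w ∈ G i, μ w = 1),
      p.coeff μ * ∏ w ∈ μ.support, z w ^ μ w := by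
    rw [hq, map_sum]
    refine Finset.sum_congr rfl fun μ _ => ?_
    rw [eval_monomial]
    rfl
  rw [step3, Finset.mul_sum, Finset.sum_filter]
  refine Finset.sum_congr rfl fun μ _ => ?_
  split <;> ring


/-- Symmetrization lemma: let `p` be a degree-`≤ d` polynomial sign-representing
`f : D → {-1,1}` (sign convention `sgn t = 1` iff `t ≥ 0`), where the variables contain `d`
pairwise disjoint groups `G 0, ..., G (d-1)` such that negating any one group maps the
subset `I ⊆ D` to itself and negates `f` there, while outside `I` some group vanishes
identically and `f = 1`. Then the polynomial `q` keeping exactly the monomials of `p` that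
consist of exactly one variable from each group (and nothing else) still sign-represents
`f` on `D`, and `W(q) ≤ W(p)`. -/
theorem stmt15 (m d : ℕ) (p : MvPolynomial (Fin (2 * m)) ℤ) (hdeg : p.totalDegree ≤ d)
    (G : Fin d → Finset (Fin (2 * m)))
    (hdisj : ∀ i j, i ≠ j → Disjoint (G i) (G j))
    (f : (Fin (2 * m) → ℤ) → ℤ) (hfval : ∀ z, f z = 1 ∨ f z = -1)
    (D I : Set (Fin (2 * m) → ℤ)) (hID : I ⊆ D)
    (hrep : ∀ z ∈ D, f z = if 0 ≤ eval z p then 1 else -1)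
    (hneg : ∀ i : Fin d, ∀ z ∈ I, negOn (G i) z ∈ I ∧ f (negOn (G i) z) = -f z)
    (hout : ∀ z ∈ D, z ∉ I → (∃ i, ∀ w ∈ G i, z w = 0) ∧ f z = 1)
    (q : MvPolynomial (Fin (2 * m)) ℤ)
    (hq : q = ∑ μ ∈ p.support.filter
        (fun μ => (∀ w ∈ μ.support, ∃ i, w ∈ G i) ∧ ∀ i, ∑ w ∈ G i, μ w = 1),
      monomial μ (p.coeff μ)) :
    (∀ z ∈ D, f z = if 0 ≤ eval z q then 1 else -1) ∧ wt q ≤ wt p := by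
  classical
  -- flipping any set of groups stays in I and multiplies f by (-1)^card
  have hflip : ∀ S : Finset (Fin d), ∀ z ∈ I, negOn (S.biUnion G) z ∈ I ∧
      f (negOn (S.biUnion G) z) = (-1:ℤ) ^ S.card * f z := by
    intro S
    induction S using Finset.induction_on with
    | empty => intro z hz; simpa [negOn_empty] using hz
    | @insert i S hiS ih =>
      intro z hz
      have hd : Disjoint (G i) (S.biUnion G) := by
        rw [Finset.disjoint_biUnion_right]
        intro j hj
        exact hdisj i j (fun h => hiS (h ▸ hj))
      rw [Finset.biUnion_insert, negOn_union _ _ hd]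
      obtain ⟨h1, h2⟩ := ih z hz
      obtain ⟨h3, h4⟩ := hneg i _ h1
      refine ⟨h3, ?_⟩
      rw [h4, h2, Finset.card_insert_of_notMem hiS]
      ring
  have hterm : ∀ z ∈ D, 0 ≤ f z * eval z p := by
    intro z hz
    rcases le_or_gt 0 (eval z p) with h | h
    · rw [hrep z hz, if_pos h]; linarith
    · rw [hrep z hz, if_neg (not_le.mpr h)]; linarith
  have hstrict : ∀ z ∈ D, f z = -1 → 0 < f z * eval z p := by
    intro z hz hfz
    have h := hrep z hz
    rw [hfz] at h
    by_cases hev : 0 ≤ eval z p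
    · rw [if_pos hev] at h; norm_num at h
    · push_neg at hev
      rw [hfz]; linarith
  constructor
  · intro z hz
    by_cases hzI : z ∈ I
    · -- use the symmetrization identity
      have hkey := key_identity G hdisj p hdeg q (by convert hq using 2; congr!) z
      have hmain : f z * ((2:ℤ) ^ d * eval z q)
          = ∑ S ∈ (Finset.univ : Finset (Fin d)).powerset,
              f (negOn (S.biUnion G) z) * eval (negOn (S.biUnion G) z) p := by
        rw [← hkey, Finset.mul_sum]
        refine Finset.sum_congr rfl fun S _ => ?_
        rw [(hflip S z hzI).2]
        ring
      have hnn : ∀ S ∈ (Finset.univ : Finset (Fin d)).powerset,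
          0 ≤ f (negOn (S.biUnion G) z) * eval (negOn (S.biUnion G) z) p := by
        intro S _
        exact hterm _ (hID (hflip S z hzI).1)
      have hpow : (0:ℤ) < 2 ^ d := pow_pos (by norm_num) d
      rcases hfval z with hfz | hfz
      · have h0 : 0 ≤ f z * ((2:ℤ) ^ d * eval z q) := by
          rw [hmain]
          exact Finset.sum_nonneg hnn
        rw [hfz] at h0 ⊢
        rw [one_mul] at h0
        have : 0 ≤ eval z q := by nlinarith
        rw [if_pos this]
      · have h0 : 0 < f z * ((2:ℤ) ^ d * eval z q) := by
          rw [hmain]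
          refine Finset.sum_pos' hnn ⟨∅, by simp, ?_⟩
          have : negOn ((∅ : Finset (Fin d)).biUnion G) z = z := by
            simp [negOn_empty]
          rw [this]
          exact hstrict z hz hfz
        rw [hfz] at h0 ⊢
        have : eval z q < 0 := by nlinarith
        rw [if_neg (not_le.mpr this)]
    · obtain ⟨⟨i, hvan⟩, hf1⟩ := hout z hz hzI
      have hq0 : eval z q = 0 := by
        rw [hq, map_sum]
        refine Finset.sum_eq_zero fun μ hμ => ?_
        obtain ⟨-, h2⟩ := (Finset.mem_filter.mp hμ).2
        have hsum1 : ∑ w ∈ G i, μ w = 1 := h2 i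
        obtain ⟨w, hwG, hw0⟩ : ∃ w ∈ G i, μ w ≠ 0 := by
          refine Finset.exists_ne_zero_of_sum_ne_zero ?_
          rw [hsum1]; norm_num
        rw [eval_monomial]
        have : (μ.prod fun w e => z w ^ e) = 0 := by
          refine Finset.prod_eq_zero (Finsupp.mem_support_iff.mpr hw0) ?_
          show z w ^ μ w = 0
          rw [hvan w hwG, zero_pow hw0]
        rw [this, mul_zero]
      rw [hq0, hf1]
      norm_num
  · -- weight bound
    have hcoeff : ∀ ν, q.coeff ν = if ν ∈ p.support.filter
        (fun μ => (∀ w ∈ μ.support, ∃ i, w ∈ G i) ∧ ∀ i, ∑ w ∈ G i, μ w = 1)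
        then p.coeff ν else 0 := by
      intro ν
      rw [hq, MvPolynomial.coeff_sum]
      simp only [coeff_monomial]
      rw [Finset.sum_ite_eq' _ ν (fun μ => p.coeff μ)]
    have hsub : q.support ⊆ p.support := by
      intro ν hν
      have := MvPolynomial.mem_support_iff.mp hν
      rw [hcoeff ν] at this
      by_cases h : ν ∈ p.support.filter
        (fun μ => (∀ w ∈ μ.support, ∃ i, w ∈ G i) ∧ ∀ i, ∑ w ∈ G i, μ w = 1)
      · exact Finset.mem_of_mem_filter ν h
      · rw [if_neg h] at this; exact absurd rfl this
    unfold wt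
    calc ∑ ν ∈ q.support, |q.coeff ν| = ∑ ν ∈ p.support, |q.coeff ν| := by
          refine Finset.sum_subset hsub fun ν _ hν => ?_
          rw [MvPolynomial.notMem_support_iff.mp hν, abs_zero]
      _ ≤ ∑ ν ∈ p.support, |p.coeff ν| := by
          refine Finset.sum_le_sum fun ν _ => ?_
          rw [hcoeff ν]
          split
          · exact le_refl _
          · simp [abs_nonneg]
end

section
/- Under the hypotheses of the main theorem (k_i ≥ 2 even for i < d, k_d ≥ 3), every threshold gate of degree at most d for the function f of Definition (d-dimensional GT generalization on n = 2·Σk_i variables) has weight at least 2^{(k_d - 2)·Π_{i=1}^{d-1} k_i - d}. -/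
set_option maxHeartbeats 1000000


/-- `p` is a threshold gate for the `d`-dimensional GT generalization `f`; the variable
`(true, i, j)` stands for `x^i_j` and `(false, i, j)` for `y^i_j`. -/
def IsGateXY {d : ℕ} (p : MvPolynomial (Bool × Fin d × ℕ) ℤ)
    (f : (Fin d → ℕ → ℤ) → (Fin d → ℕ → ℤ) → ℤ) : Prop :=
  ∀ x y : Fin d → ℕ → ℤ, Bool01 x → Bool01 y →
    (f x y = 1 ↔
      0 ≤ MvPolynomial.eval
        (fun v : Bool × Fin d × ℕ => if v.1 then x v.2.1 v.2.2 else y v.2.1 v.2.2) p)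

namespace Stmt16Aux

open Finset

/-! ### Order basics -/

lemma snakePar_congr (k α β : ℕ → ℕ) : ∀ l, (∀ m, m < l → α m = β m) →
    snakePar k α l = snakePar k β l := by
  intro l
  induction l with
  | zero => intro _; rfl
  | succ n ih =>
    intro h
    simp only [snakePar]
    rw [ih (fun m hm => h m (by omega)), h n (by omega)]

lemma snakeNum_congr (k α β : ℕ → ℕ) (l : ℕ) (h : ∀ m, m ≤ l → α m = β m) :
    snakeNum k α l = snakeNum k β l := by
  unfold snakeNum
  rw [snakePar_congr k α β l (fun m hm => h m (le_of_lt hm)), h l le_rfl]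

lemma snakeLt_asymm {d : ℕ} {k a b : ℕ → ℕ} (h1 : snakeLt d k a b) (h2 : snakeLt d k b a) :
    False := by
  obtain ⟨l1, hl1, he1, hs1⟩ := h1
  obtain ⟨l2, hl2, he2, hs2⟩ := h2
  rcases lt_trichotomy l1 l2 with h | h | h
  · have := he2 l1 h; omega
  · subst h; omega
  · have := he1 l2 h; omega

lemma snakeLt_irrefl {d : ℕ} {k a : ℕ → ℕ} (h : snakeLt d k a a) : False := by
  obtain ⟨l, _, _, hs⟩ := h; omega

lemma extFun_lt {d : ℕ} (f : Fin d → ℕ) {l : ℕ} (h : l < d) : extFun f l = f ⟨l, h⟩ := by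
  simp [extFun, h]

lemma extFun_update {d : ℕ} (γ : Fin d → ℕ) (i : Fin d) (v : ℕ) :
    extFun (Function.update γ i v) = Function.update (extFun γ) (i : ℕ) v := by
  funext l
  by_cases h : l < d
  · by_cases he : l = (i : ℕ)
    · rw [he, Function.update_self, extFun_lt _ i.isLt]
      have : (⟨(i:ℕ), i.isLt⟩ : Fin d) = i := Fin.ext rfl
      rw [this, Function.update_self]
    · rw [Function.update_of_ne he, extFun_lt _ h, extFun_lt _ h,
        Function.update_of_ne (fun hc => he (congrArg Fin.val hc))]
  · have hne : l ≠ (i : ℕ) := by have := i.isLt; omega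
    rw [Function.update_of_ne hne]
    simp [extFun, h]

/-! ### Numbers and parities for tuples -/

variable {d : ℕ}

def Good (k : Fin d → ℕ) (γ : Fin d → ℕ) : Prop := ∀ i, 1 ≤ γ i ∧ γ i ≤ k i

lemma mem_snakeK_iff {k γ : Fin d → ℕ} : γ ∈ snakeK k ↔ Good k γ := by
  simp [snakeK, Fintype.mem_piFinset, Good, Finset.mem_Icc]

def ParF (k γ : Fin d → ℕ) (l : ℕ) : ℕ := snakePar (extFun k) (extFun γ) l

def NumF (k γ : Fin d → ℕ) (l : ℕ) : ℕ := snakeNum (extFun k) (extFun γ) l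

lemma ParF_congr {k γ γ' : Fin d → ℕ} {l : ℕ} (h : ∀ m : Fin d, (m : ℕ) < l → γ m = γ' m) :
    ParF k γ l = ParF k γ' l := by
  apply snakePar_congr
  intro m hm
  by_cases hmd : m < d
  · rw [extFun_lt _ hmd, extFun_lt _ hmd]; exact h ⟨m, hmd⟩ hm
  · simp [extFun, hmd]

lemma NumF_congr {k γ γ' : Fin d → ℕ} {l : ℕ} (h : ∀ m : Fin d, (m : ℕ) ≤ l → γ m = γ' m) :
    NumF k γ l = NumF k γ' l := by
  apply snakeNum_congr
  intro m hm
  by_cases hmd : m < d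
  · rw [extFun_lt _ hmd, extFun_lt _ hmd]; exact h ⟨m, hmd⟩ hm
  · simp [extFun, hmd]

lemma NumF_def (k γ : Fin d → ℕ) (i : Fin d) :
    NumF k γ i = if ParF k γ i = 1 then γ i else k i + 1 - γ i := by
  unfold NumF snakeNum ParF
  rw [extFun_lt γ i.isLt, extFun_lt k i.isLt]

lemma ParF_update (k γ : Fin d → ℕ) (i : Fin d) (v : ℕ) {l : ℕ} (hl : l ≤ i) :
    ParF k (Function.update γ i v) l = ParF k γ l := by
  apply ParF_congr
  intro m hm
  apply Function.update_of_ne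
  intro hc
  rw [hc] at hm
  omega

lemma NumF_update_lt (k γ : Fin d → ℕ) (i : Fin d) (v : ℕ) {l : ℕ} (hl : l < i) :
    NumF k (Function.update γ i v) l = NumF k γ l := by
  apply NumF_congr
  intro m hm
  apply Function.update_of_ne
  intro hc
  rw [hc] at hm
  omega

lemma NumF_update_self (k γ : Fin d → ℕ) (i : Fin d) (v : ℕ) :
    NumF k (Function.update γ i v) i = if ParF k γ i = 1 then v else k i + 1 - v := by
  rw [NumF_def, Function.update_self, ParF_update k γ i v le_rfl]

lemma NumF_bounds {k γ : Fin d → ℕ} (hγ : Good k γ) (i : Fin d) :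
    1 ≤ NumF k γ i ∧ NumF k γ i ≤ k i := by
  rw [NumF_def]
  have := hγ i
  split <;> omega

/-! ### The coefficient sums -/

noncomputable def mono (z : Fin d → Bool) (γ : Fin d → ℕ) : (Bool × Fin d × ℕ) →₀ ℕ :=
  ∑ i, Finsupp.single (z i, i, γ i) 1

def sgn (z : Fin d → Bool) : ℤ := ∏ i, (if z i then 1 else -1)

noncomputable def cc (p : MvPolynomial (Bool × Fin d × ℕ) ℤ) (γ : Fin d → ℕ) : ℤ :=
  ∑ z : Fin d → Bool, sgn z * p.coeff (mono z γ)

lemma mono_apply (z : Fin d → Bool) (γ : Fin d → ℕ) (v : Bool × Fin d × ℕ) :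
    mono z γ v = if v = (z v.2.1, v.2.1, γ v.2.1) then 1 else 0 := by
  classical
  rw [mono, Finsupp.finset_sum_apply]
  rw [Finset.sum_eq_single v.2.1]
  · rw [Finsupp.single_apply]
    by_cases h : v = (z v.2.1, v.2.1, γ v.2.1)
    · rw [if_pos h.symm, if_pos h]
    · rw [if_neg (fun hc => h hc.symm), if_neg h]
  · intro b _ hb
    rw [Finsupp.single_apply, if_neg]
    intro hc
    exact hb (by rw [← hc])
  · simp

lemma mono_inj {z z' : Fin d → Bool} {γ γ' : Fin d → ℕ} (h : mono z γ = mono z' γ') :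
    z = z' ∧ γ = γ' := by
  classical
  have key : ∀ i : Fin d, z i = z' i ∧ γ i = γ' i := by
    intro i
    have h1 : mono z γ (z i, i, γ i) = 1 := by rw [mono_apply]; simp
    have h2 : mono z' γ' (z i, i, γ i) = 1 := by rw [← h]; exact h1
    rw [mono_apply] at h2
    by_cases hc : (z i, i, γ i) = (z' i, i, γ' i)
    · exact ⟨congrArg Prod.fst hc, congrArg (fun w => w.2.2) hc⟩
    · rw [if_neg hc] at h2; omega
  exact ⟨funext fun i => (key i).1, funext fun i => (key i).2⟩

lemma sgn_cases (z : Fin d → Bool) : sgn z = 1 ∨ sgn z = -1 := by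
  unfold sgn
  refine Finset.prod_induction _ (fun t => t = 1 ∨ t = -1) ?_ (Or.inl rfl) ?_
  · rintro a b (ha | ha) (hb | hb) <;> rw [ha, hb] <;> norm_num
  · intro i _
    by_cases h : z i <;> simp [h]

/-! ### The line set -/

def lineS (k γ : Fin d → ℕ) (l : Fin d) : Finset ℕ :=
  (Finset.Icc 1 (k l)).filter fun v => NumF k (Function.update γ l v) l < NumF k γ l

lemma self_not_mem_lineS (k γ : Fin d → ℕ) (l : Fin d) : γ l ∉ lineS k γ l := by
  unfold lineS
  rw [Finset.mem_filter]
  rintro ⟨-, h⟩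
  rw [Function.update_eq_self] at h
  omega

/-! ### Input constructions for the line inequality -/

def XF (σ : Fin d → ℕ → ℤ) (ε : Fin d → Bool) : Fin d → ℕ → ℤ :=
  fun i j => if σ i j * (if ε i then 1 else -1) = 1 then 1 else 0

def YF (σ : Fin d → ℕ → ℤ) (ε : Fin d → Bool) : Fin d → ℕ → ℤ :=
  fun i j => if σ i j * (if ε i then 1 else -1) = -1 then 1 else 0

def valF (σ : Fin d → ℕ → ℤ) (ε : Fin d → Bool) : Bool × Fin d × ℕ → ℤ :=
  fun w => if w.1 then XF σ ε w.2.1 w.2.2 else YF σ ε w.2.1 w.2.2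

def WB (σ : Fin d → ℕ → ℤ) (w : Bool × Fin d × ℕ) (b : Bool) : ℤ :=
  if w.1 then (if σ w.2.1 w.2.2 * (if b then 1 else -1) = 1 then 1 else 0)
  else (if σ w.2.1 w.2.2 * (if b then 1 else -1) = -1 then 1 else 0)

lemma valF_eq_WB (σ : Fin d → ℕ → ℤ) (ε : Fin d → Bool) (w : Bool × Fin d × ℕ) :
    valF σ ε w = WB σ w (ε w.2.1) := rfl

lemma XF01 (σ : Fin d → ℕ → ℤ) (ε : Fin d → Bool) : Bool01 (XF σ ε) := by
  intro i j
  unfold XF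
  by_cases h : σ i j * (if ε i then 1 else -1) = 1
  · rw [if_pos h]; right; rfl
  · rw [if_neg h]; left; rfl

lemma YF01 (σ : Fin d → ℕ → ℤ) (ε : Fin d → Bool) : Bool01 (YF σ ε) := by
  intro i j
  unfold YF
  by_cases h : σ i j * (if ε i then 1 else -1) = -1
  · rw [if_pos h]; right; rfl
  · rw [if_neg h]; left; rfl

lemma XYdiff (σ : Fin d → ℕ → ℤ) (hσ : ∀ i j, σ i j = 1 ∨ σ i j = -1 ∨ σ i j = 0)
    (ε : Fin d → Bool) (i : Fin d) (j : ℕ) :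
    XF σ ε i j - YF σ ε i j = σ i j * (if ε i then 1 else -1) := by
  unfold XF YF
  rcases hσ i j with h | h | h <;> rw [h] <;> by_cases hb : ε i <;> norm_num [hb]

lemma tProd_XY (σ : Fin d → ℕ → ℤ) (hσ : ∀ i j, σ i j = 1 ∨ σ i j = -1 ∨ σ i j = 0)
    (ε : Fin d → Bool) (β : Fin d → ℕ) :
    tProd (XF σ ε) (YF σ ε) β = (∏ i, σ i (β i)) * sgn ε := by
  unfold tProd sgn
  rw [← Finset.prod_mul_distrib]
  apply Finset.prod_congr rfl
  intro i _
  exact XYdiff σ hσ ε i (β i)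

def lineSig (k γ : Fin d → ℕ) (l : Fin d) (s : ℕ → ℤ) : Fin d → ℕ → ℤ :=
  fun i j =>
    if i = l then (if j ∈ insert (γ l) (lineS k γ l) then (if j = γ l then 1 else s j) else 0)
    else (if j = γ i then 1 else 0)

lemma lineSig_cases (k γ : Fin d → ℕ) (l : Fin d) (s : ℕ → ℤ)
    (hs : ∀ v ∈ lineS k γ l, s v = 1 ∨ s v = -1) :
    ∀ i j, lineSig k γ l s i j = 1 ∨ lineSig k γ l s i j = -1 ∨ lineSig k γ l s i j = 0 := by
  intro i j
  unfold lineSig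
  by_cases hil : i = l
  · rw [if_pos hil]
    by_cases hj : j ∈ insert (γ l) (lineS k γ l)
    · rw [if_pos hj]
      by_cases hjl : j = γ l
      · rw [if_pos hjl]; left; rfl
      · rw [if_neg hjl]
        rcases Finset.mem_insert.mp hj with h | h
        · exact absurd h hjl
        · rcases hs j h with h' | h'
          · left; exact h'
          · right; left; exact h'
    · rw [if_neg hj]; right; right; rfl
  · rw [if_neg hil]
    by_cases hj : j = γ i
    · rw [if_pos hj]; left; rfl
    · rw [if_neg hj]; right; right; rfl

lemma lineSig_diag (k γ : Fin d → ℕ) (l : Fin d) (s : ℕ → ℤ) (i : Fin d) :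
    lineSig k γ l s i (γ i) = 1 := by
  unfold lineSig
  by_cases hil : i = l
  · rw [if_pos hil, hil, if_pos (Finset.mem_insert_self _ _), if_pos rfl]
  · rw [if_neg hil, if_pos rfl]

lemma lineSig_ne_zero {k γ : Fin d → ℕ} {l : Fin d} {s : ℕ → ℤ} {i : Fin d} {j : ℕ}
    (h : lineSig k γ l s i j ≠ 0) :
    (i ≠ l → j = γ i) ∧ (i = l → j ∈ insert (γ l) (lineS k γ l)) := by
  unfold lineSig at h
  constructor
  · intro hil
    rw [if_neg hil] at h
    by_contra hj
    rw [if_neg hj] at h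
    exact h rfl
  · intro hil
    rw [if_pos hil] at h
    by_contra hj
    rw [if_neg hj] at h
    exact h rfl

lemma lineSig_onL {k γ : Fin d → ℕ} {l : Fin d} {s : ℕ → ℤ} {j : ℕ}
    (h : j ∈ insert (γ l) (lineS k γ l)) :
    lineSig k γ l s l j = if j = γ l then 1 else s j := by
  unfold lineSig
  rw [if_pos rfl, if_pos h]

/-! ### Counting and gate bounds -/

lemma sum_prod_bool (F : Fin d → Bool → ℤ) :
    ∑ ε : Fin d → Bool, ∏ i, F i (ε i) = ∏ i, (F i true + F i false) := by
  classical
  have h1 : ∀ i : Fin d, F i true + F i false = ∑ b : Bool, F i b := by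
    intro i; rw [Fintype.sum_bool]
  rw [Finset.prod_congr rfl (fun i _ => h1 i), Finset.prod_univ_sum, Fintype.piFinset_univ]

lemma sgn_flip (hd : 0 < d) (ε : Fin d → Bool) :
    sgn (Function.update ε ⟨0, hd⟩ (!ε ⟨0, hd⟩)) = - sgn ε := by
  classical
  set i0 : Fin d := ⟨0, hd⟩
  unfold sgn
  rw [← Finset.mul_prod_erase Finset.univ
      (fun i => if Function.update ε i0 (!ε i0) i then (1:ℤ) else -1) (Finset.mem_univ i0),
    ← Finset.mul_prod_erase Finset.univ (fun i => if ε i then (1:ℤ) else -1) (Finset.mem_univ i0)]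
  have h2 : ∏ i ∈ Finset.univ.erase i0, (if Function.update ε i0 (!ε i0) i then (1:ℤ) else -1)
      = ∏ i ∈ Finset.univ.erase i0, (if ε i then (1:ℤ) else -1) := by
    apply Finset.prod_congr rfl
    intro i hi
    rw [Function.update_of_ne (Finset.ne_of_mem_erase hi)]
  rw [h2, Function.update_self]
  by_cases hb : ε i0 <;> simp [hb]

lemma count_neg (hd : 0 < d) :
    (((Finset.univ : Finset (Fin d → Bool)).filter (fun ε => sgn ε = -1)).card) = 2^(d-1) := by
  classical
  set i0 : Fin d := ⟨0, hd⟩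
  set flip : (Fin d → Bool) → (Fin d → Bool) := fun ε => Function.update ε i0 (!ε i0) with hflip
  have hflipval : ∀ ε, flip ε = Function.update ε i0 (!ε i0) := fun _ => rfl
  have hinvol : ∀ ε, flip (flip ε) = ε := by
    intro ε
    rw [hflipval, hflipval]
    have h1 : Function.update ε i0 (!ε i0) i0 = !ε i0 := Function.update_self _ _ _
    rw [h1, Function.update_idem, Bool.not_not, Function.update_eq_self]
  have hcard : ((Finset.univ : Finset (Fin d → Bool)).filter (fun ε => sgn ε = 1)).card
      = ((Finset.univ : Finset (Fin d → Bool)).filter (fun ε => sgn ε = -1)).card := by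
    apply Finset.card_bij' (fun ε _ => flip ε) (fun ε _ => flip ε)
    · intro ε hε
      rw [Finset.mem_filter] at hε ⊢
      refine ⟨Finset.mem_univ _, ?_⟩
      rw [hflipval, sgn_flip hd, hε.2]
    · intro ε hε
      rw [Finset.mem_filter] at hε ⊢
      refine ⟨Finset.mem_univ _, ?_⟩
      have := sgn_flip hd ε
      rw [← hflipval] at this
      rw [this, hε.2]
      norm_num
    · intro ε _
      exact hinvol ε
    · intro ε _
      exact hinvol ε
  have hdich : (Finset.univ : Finset (Fin d → Bool)).filter (fun ε => ¬ sgn ε = 1)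
      = (Finset.univ : Finset (Fin d → Bool)).filter (fun ε => sgn ε = -1) := by
    apply Finset.filter_congr
    intro ε _
    rcases sgn_cases ε with h | h <;> simp [h]
  have hsum := Finset.card_filter_add_card_filter_not
    (s := (Finset.univ : Finset (Fin d → Bool))) (p := fun ε => sgn ε = 1)
  rw [hdich] at hsum
  have huniv : (Finset.univ : Finset (Fin d → Bool)).card = 2^d := by
    rw [Finset.card_univ]
    simp
  rw [huniv] at hsum
  have hpow : 2^d = 2^(d-1) * 2 := by
    have hde : d - 1 + 1 = d := by omega
    conv_lhs => rw [← hde]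
    rw [pow_succ]
  omega

lemma gate_bounds (hd : 0 < d) (k : Fin d → ℕ)
    (f : (Fin d → ℕ → ℤ) → (Fin d → ℕ → ℤ) → ℤ) (hf : IsSnakeGT k f)
    (p : MvPolynomial (Bool × Fin d × ℕ) ℤ) (hp : IsGateXY p f)
    (γ : Fin d → ℕ) (hγ : Good k γ) (l : Fin d) (s : ℕ → ℤ)
    (hs : ∀ v ∈ lineS k γ l, s v = 1 ∨ s v = -1) (ε : Fin d → Bool) :
    (sgn ε = 1 → 0 ≤ MvPolynomial.eval (valF (lineSig k γ l s) ε) p) ∧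
    (sgn ε = -1 → MvPolynomial.eval (valF (lineSig k γ l s) ε) p ≤ -1) := by
  classical
  set σ := lineSig k γ l s with hσdef
  have hσ : ∀ i j, σ i j = 1 ∨ σ i j = -1 ∨ σ i j = 0 := lineSig_cases k γ l s hs
  have hb : f (XF σ ε) (YF σ ε) = 1 ↔ 0 ≤ MvPolynomial.eval (valF σ ε) p :=
    hp (XF σ ε) (YF σ ε) (XF01 σ ε) (YF01 σ ε)
  have hγK : γ ∈ snakeK k := mem_snakeK_iff.mpr hγ
  have htp : tProd (XF σ ε) (YF σ ε) γ = sgn ε := by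
    rw [tProd_XY σ hσ ε γ]
    have h1 : ∏ i, σ i (γ i) = 1 := Finset.prod_eq_one (fun i _ => lineSig_diag k γ l s i)
    rw [h1, one_mul]
  have hne : tProd (XF σ ε) (YF σ ε) γ ≠ 0 := by
    rw [htp]
    rcases sgn_cases ε with h | h <;> rw [h] <;> norm_num
  have hmaxim : ∀ β ∈ snakeK k, snakeLt d (extFun k) (extFun γ) (extFun β) →
      tProd (XF σ ε) (YF σ ε) β = 0 := by
    intro β hβK hlt
    by_contra hne2
    rw [tProd_XY σ hσ ε β] at hne2
    have hprod : (∏ i, σ i (β i)) ≠ 0 := fun hc => hne2 (by rw [hc, zero_mul])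
    have hfac : ∀ i, σ i (β i) ≠ 0 := by
      intro i
      exact Finset.prod_ne_zero_iff.mp hprod i (Finset.mem_univ i)
    have hent : ∀ i, i ≠ l → β i = γ i := fun i hi => (lineSig_ne_zero (hfac i)).1 hi
    have hl2 : β l ∈ insert (γ l) (lineS k γ l) := (lineSig_ne_zero (hfac l)).2 rfl
    rcases Finset.mem_insert.mp hl2 with hbl | hbl
    · have hβγ : β = γ := funext fun i => by
        by_cases hi : i = l
        · rw [hi]; exact hbl
        · exact hent i hi
      rw [hβγ] at hlt
      exact snakeLt_irrefl hlt
    · have hβup : β = Function.update γ l (β l) := funext fun i => by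
        by_cases hi : i = l
        · rw [hi, Function.update_self]
        · rw [Function.update_of_ne hi]; exact hent i hi
      have hlt2 : snakeLt d (extFun k) (extFun β) (extFun γ) := by
        refine ⟨l, l.isLt, ?_, ?_⟩
        · intro m hm
          apply snakeNum_congr
          intro m' hm'
          by_cases hmd : m' < d
          · rw [extFun_lt _ hmd, extFun_lt _ hmd]
            apply hent
            intro hc
            have := congrArg Fin.val hc
            simp at this
            omega
          · simp [extFun, hmd]
        · show NumF k β (l:ℕ) < NumF k γ (l:ℕ)
          unfold lineS at hbl
          rw [Finset.mem_filter] at hbl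
          have hmem := hbl.2
          rw [hβup]
          exact hmem
      exact snakeLt_asymm hlt hlt2
  have hfval := (hf (XF σ ε) (YF σ ε) (XF01 σ ε) (YF01 σ ε)).2 γ hγK hne hmaxim
  rw [htp] at hfval
  constructor
  · intro h1
    apply hb.mp
    rw [hfval, h1]
    norm_num
  · intro h1
    have h2 : f (XF σ ε) (YF σ ε) ≠ 1 := by
      rw [hfval, h1]
      norm_num
    have h3 : ¬ (0 ≤ MvPolynomial.eval (valF σ ε) p) := fun hge => h2 (hb.mpr hge)
    omega

/-! ### The per-monomial evaluation identity -/

lemma all_eq_one {g : Fin d → ℕ} (h1 : ∀ i, 1 ≤ g i) (h2 : ∑ i, g i ≤ d) : ∀ i, g i = 1 := by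
  by_contra hne
  push_neg at hne
  obtain ⟨i, hi⟩ := hne
  have h3 : ∑ _j : Fin d, 1 < ∑ j : Fin d, g j :=
    Finset.sum_lt_sum (fun j _ => h1 j) ⟨i, Finset.mem_univ i, by have := h1 i; omega⟩
  rw [show (∑ _j : Fin d, 1) = d by simp] at h3
  omega

lemma WB_diff (σ : Fin d → ℕ → ℤ) (w : Bool × Fin d × ℕ) (c : ℤ)
    (hσv : σ w.2.1 w.2.2 = c) (hc : c = 1 ∨ c = -1) :
    WB σ w true - WB σ w false = (if w.1 then (1:ℤ) else -1) * c := by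
  unfold WB
  rw [hσv]
  rcases hc with h | h <;> subst h <;> cases hw1 : w.1 <;> norm_num

lemma ident_mono (k γ : Fin d → ℕ) (l : Fin d) (s : ℕ → ℤ)
    (hs : ∀ v ∈ lineS k γ l, s v = 1 ∨ s v = -1)
    (u : (Bool × Fin d × ℕ) →₀ ℕ) (a : ℤ) (hu : (u.sum fun _ e => e) ≤ d) :
    ∑ ε : Fin d → Bool, sgn ε * MvPolynomial.eval (valF (lineSig k γ l s) ε)
        (MvPolynomial.monomial u a)
      = ∑ v ∈ insert (γ l) (lineS k γ l), (if v = γ l then 1 else s v) *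
          ∑ z : Fin d → Bool, sgn z *
            MvPolynomial.coeff (mono z (Function.update γ l v)) (MvPolynomial.monomial u a) := by
  classical
  have heval : ∀ ε : Fin d → Bool,
      MvPolynomial.eval (valF (lineSig k γ l s) ε) (MvPolynomial.monomial u a)
      = a * ∏ i : Fin d, ∏ w ∈ u.support.filter (fun w => w.2.1 = i),
          (WB (lineSig k γ l s) w (ε i))^(u w) := by
    intro ε
    rw [MvPolynomial.eval_monomial]
    congr 1
    rw [Finsupp.prod]
    rw [← Finset.prod_fiberwise_of_maps_to (g := fun w : Bool × Fin d × ℕ => w.2.1)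
      (fun w _ => Finset.mem_univ w.2.1) (fun w => (valF (lineSig k γ l s) ε w)^(u w))]
    apply Finset.prod_congr rfl
    intro i _
    apply Finset.prod_congr rfl
    intro w hw
    rw [Finset.mem_filter] at hw
    rw [valF_eq_WB, hw.2]
  have hLHS : ∑ ε : Fin d → Bool, sgn ε * MvPolynomial.eval (valF (lineSig k γ l s) ε)
        (MvPolynomial.monomial u a)
      = a * ∏ i : Fin d,
          ((∏ w ∈ u.support.filter (fun w => w.2.1 = i), (WB (lineSig k γ l s) w true)^(u w))
          - (∏ w ∈ u.support.filter (fun w => w.2.1 = i), (WB (lineSig k γ l s) w false)^(u w))) := by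
    calc ∑ ε : Fin d → Bool, sgn ε * MvPolynomial.eval (valF (lineSig k γ l s) ε)
          (MvPolynomial.monomial u a)
        = ∑ ε : Fin d → Bool, a * ∏ i : Fin d, ((if ε i then (1:ℤ) else -1) *
            ∏ w ∈ u.support.filter (fun w => w.2.1 = i), (WB (lineSig k γ l s) w (ε i))^(u w)) := by
          apply Finset.sum_congr rfl
          intro ε _
          rw [heval ε, Finset.prod_mul_distrib]
          unfold sgn
          ring
      _ = a * ∑ ε : Fin d → Bool, ∏ i : Fin d, ((if ε i then (1:ℤ) else -1) *
            ∏ w ∈ u.support.filter (fun w => w.2.1 = i), (WB (lineSig k γ l s) w (ε i))^(u w)) := by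
          rw [Finset.mul_sum]
      _ = a * ∏ i : Fin d, ((if true then (1:ℤ) else -1) *
            (∏ w ∈ u.support.filter (fun w => w.2.1 = i), (WB (lineSig k γ l s) w true)^(u w))
            + (if false then (1:ℤ) else -1) *
            (∏ w ∈ u.support.filter (fun w => w.2.1 = i), (WB (lineSig k γ l s) w false)^(u w))) := by
          rw [sum_prod_bool (fun i b => (if b then (1:ℤ) else -1) *
            ∏ w ∈ u.support.filter (fun w => w.2.1 = i), (WB (lineSig k γ l s) w b)^(u w))]
      _ = _ := by
          congr 1
          apply Finset.prod_congr rfl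
          intro i _
          norm_num
          ring
  by_cases hcase : ∃ i0 : Fin d, u.support.filter (fun w => w.2.1 = i0) = ∅
  · obtain ⟨i0, hi0⟩ := hcase
    rw [hLHS]
    have hzero : (∏ w ∈ u.support.filter (fun w => w.2.1 = i0), (WB (lineSig k γ l s) w true)^(u w))
        - (∏ w ∈ u.support.filter (fun w => w.2.1 = i0), (WB (lineSig k γ l s) w false)^(u w))
        = 0 := by
      rw [hi0]
      simp
    rw [Finset.prod_eq_zero (Finset.mem_univ i0) hzero, mul_zero]
    symm
    apply Finset.sum_eq_zero
    intro v hv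
    rw [mul_eq_zero]
    right
    apply Finset.sum_eq_zero
    intro z _
    rw [MvPolynomial.coeff_monomial]
    by_cases hum : u = mono z (Function.update γ l v)
    · exfalso
      have hmem : (z i0, i0, Function.update γ l v i0) ∈
          u.support.filter (fun w => w.2.1 = i0) := by
        rw [Finset.mem_filter]
        constructor
        · rw [Finsupp.mem_support_iff, hum, mono_apply]
          simp
        · rfl
      rw [hi0] at hmem
      exact absurd hmem (Finset.notMem_empty _)
    · rw [if_neg hum, mul_zero]
  · push_neg at hcase
    have hcard1 : ∀ i : Fin d, (u.support.filter (fun w => w.2.1 = i)).card = 1 := by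
      have hsum1 : ∑ i : Fin d, (u.support.filter (fun w => w.2.1 = i)).card = u.support.card :=
        (Finset.card_eq_sum_card_fiberwise (fun w _ => Finset.mem_univ w.2.1)).symm
      have hsc : u.support.card ≤ d := by
        have h1 : u.support.card = ∑ _w ∈ u.support, 1 := by rw [Finset.card_eq_sum_ones]
        have h2 : ∑ _w ∈ u.support, 1 ≤ ∑ w ∈ u.support, u w :=
          Finset.sum_le_sum (fun w hw => by
            rw [Finsupp.mem_support_iff] at hw
            omega)
        have h3 : ∑ w ∈ u.support, u w = u.sum (fun _ e => e) := rfl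
        omega
      apply all_eq_one
      · intro j
        apply Finset.card_pos.mpr
        exact hcase j
      · omega
    have hω : ∀ i : Fin d, ∃ w, u.support.filter (fun w => w.2.1 = i) = {w} := by
      intro i
      exact Finset.card_eq_one.mp (hcard1 i)
    choose ω hωsing using hω
    have hωmem : ∀ i, ω i ∈ u.support ∧ (ω i).2.1 = i := by
      intro i
      have hmem : ω i ∈ u.support.filter (fun w => w.2.1 = i) := by
        rw [hωsing i]
        exact Finset.mem_singleton_self _
      rw [Finset.mem_filter] at hmem
      exact hmem
    have hsupp : ∀ w, w ∈ u.support ↔ w = ω (w.2.1) := by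
      intro w
      constructor
      · intro hw
        have hmem : w ∈ u.support.filter (fun w' => w'.2.1 = w.2.1) := by
          rw [Finset.mem_filter]
          exact ⟨hw, rfl⟩
        rw [hωsing w.2.1] at hmem
        exact Finset.mem_singleton.mp hmem
      · intro hw
        rw [hw]
        exact (hωmem w.2.1).1
    have hexp1 : ∀ i, u (ω i) = 1 := by
      have hsum2 : ∑ i : Fin d, u (ω i) = ∑ w ∈ u.support, u w := by
        rw [← Finset.sum_fiberwise_of_maps_to (g := fun w : Bool × Fin d × ℕ => w.2.1)
          (fun w _ => Finset.mem_univ w.2.1) (fun w => u w)]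
        apply Finset.sum_congr rfl
        intro i _
        rw [hωsing i, Finset.sum_singleton]
      apply all_eq_one
      · intro i
        have hmem := (hωmem i).1
        rw [Finsupp.mem_support_iff] at hmem
        omega
      · rw [hsum2]
        exact hu
    have hGval : ∀ (i : Fin d) (b : Bool),
        ∏ w ∈ u.support.filter (fun w => w.2.1 = i), (WB (lineSig k γ l s) w b)^(u w)
        = WB (lineSig k γ l s) (ω i) b := by
      intro i b
      rw [hωsing i, Finset.prod_singleton, hexp1 i, pow_one]
    by_cases hz : ∃ i0 : Fin d, lineSig k γ l s i0 ((ω i0).2.2) = 0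
    · obtain ⟨i0, hi0⟩ := hz
      rw [hLHS]
      have hWB0 : ∀ b, WB (lineSig k γ l s) (ω i0) b = 0 := by
        intro b
        unfold WB
        rw [(hωmem i0).2, hi0, zero_mul]
        norm_num
      rw [Finset.prod_eq_zero (Finset.mem_univ i0)
        (by rw [hGval i0 true, hGval i0 false, hWB0 true, hWB0 false]; ring), mul_zero]
      symm
      apply Finset.sum_eq_zero
      intro v hv
      rw [mul_eq_zero]
      right
      apply Finset.sum_eq_zero
      intro z _
      rw [MvPolynomial.coeff_monomial]
      by_cases hum : u = mono z (Function.update γ l v)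
      · exfalso
        have hmem := (hωmem i0).1
        rw [hum, Finsupp.mem_support_iff, mono_apply] at hmem
        have hω0 : ω i0 = (z (ω i0).2.1, (ω i0).2.1, Function.update γ l v (ω i0).2.1) := by
          by_contra hc
          rw [if_neg hc] at hmem
          exact hmem rfl
        have h22 : (ω i0).2.2 = Function.update γ l v (ω i0).2.1 :=
          congrArg (fun w => w.2.2) hω0
        rw [(hωmem i0).2] at h22
        by_cases hil : i0 = l
        · rw [hil] at h22 hi0
          rw [Function.update_self] at h22
          rw [h22] at hi0
          rw [lineSig_onL hv] at hi0
          by_cases hvl : v = γ l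
          · rw [if_pos hvl] at hi0
            norm_num at hi0
          · rw [if_neg hvl] at hi0
            rcases hs v (Finset.mem_insert.mp hv |>.resolve_left hvl) with h | h <;>
              rw [h] at hi0 <;> norm_num at hi0
        · rw [Function.update_of_ne hil] at h22
          rw [h22, lineSig_diag] at hi0
          norm_num at hi0
      · rw [if_neg hum, mul_zero]
    · push_neg at hz
      have hv0L : (ω l).2.2 ∈ insert (γ l) (lineS k γ l) := (lineSig_ne_zero (hz l)).2 rfl
      have hne' : ∀ i, i ≠ l → (ω i).2.2 = γ i := fun i hi => (lineSig_ne_zero (hz i)).1 hi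
      have hω_eq : ∀ i, ω i = ((ω i).1, i, Function.update γ l ((ω l).2.2) i) := by
        intro i
        have h1 : (ω i).2.1 = i := (hωmem i).2
        have h2 : (ω i).2.2 = Function.update γ l ((ω l).2.2) i := by
          by_cases hi : i = l
          · rw [hi, Function.update_self]
          · rw [Function.update_of_ne hi]
            exact hne' i hi
        calc ω i = ((ω i).1, (ω i).2.1, (ω i).2.2) := rfl
          _ = ((ω i).1, i, Function.update γ l ((ω l).2.2) i) := by rw [h1, h2]
      have hu_eq : u = mono (fun i => (ω i).1) (Function.update γ l ((ω l).2.2)) := by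
        apply Finsupp.ext
        intro w
        rw [mono_apply]
        by_cases hw : w = ((ω w.2.1).1, w.2.1, Function.update γ l ((ω l).2.2) w.2.1)
        · rw [if_pos hw]
          have hwω : w = ω w.2.1 := by
            rw [hw, ← hω_eq w.2.1, (hωmem w.2.1).2]
          rw [congrArg u hwω]
          exact hexp1 w.2.1
        · rw [if_neg hw]
          by_contra hne2
          have hwsupp : w ∈ u.support := Finsupp.mem_support_iff.mpr hne2
          rw [hsupp w] at hwsupp
          rw [hwsupp, hω_eq w.2.1] at hw
          exact hw rfl
      have hσv : lineSig k γ l s l ((ω l).2.2)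
          = if (ω l).2.2 = γ l then 1 else s ((ω l).2.2) := lineSig_onL hv0L
      have hσv_cases : (if (ω l).2.2 = γ l then (1:ℤ) else s ((ω l).2.2)) = 1 ∨
          (if (ω l).2.2 = γ l then (1:ℤ) else s ((ω l).2.2)) = -1 := by
        by_cases hvl : (ω l).2.2 = γ l
        · rw [if_pos hvl]; left; rfl
        · rw [if_neg hvl]
          exact hs _ (Finset.mem_insert.mp hv0L |>.resolve_left hvl)
      have hD : ∀ i : Fin d, WB (lineSig k γ l s) (ω i) true - WB (lineSig k γ l s) (ω i) false
          = (if (ω i).1 then (1:ℤ) else -1) *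
            (if i = l then (if (ω l).2.2 = γ l then 1 else s ((ω l).2.2)) else 1) := by
        intro i
        by_cases hi : i = l
        · rw [if_pos hi]
          apply WB_diff
          · rw [(hωmem i).2, hi]
            exact hσv
          · exact hσv_cases
        · rw [if_neg hi]
          apply WB_diff
          · rw [(hωmem i).2, hne' i hi]
            exact lineSig_diag k γ l s i
          · left; rfl
      rw [hLHS]
      have hLHS2 : a * ∏ i : Fin d,
          ((∏ w ∈ u.support.filter (fun w => w.2.1 = i), (WB (lineSig k γ l s) w true)^(u w))
          - (∏ w ∈ u.support.filter (fun w => w.2.1 = i), (WB (lineSig k γ l s) w false)^(u w)))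
          = a * (sgn (fun i => (ω i).1) * (if (ω l).2.2 = γ l then 1 else s ((ω l).2.2))) := by
        congr 1
        calc ∏ i : Fin d,
            ((∏ w ∈ u.support.filter (fun w => w.2.1 = i), (WB (lineSig k γ l s) w true)^(u w))
            - (∏ w ∈ u.support.filter (fun w => w.2.1 = i), (WB (lineSig k γ l s) w false)^(u w)))
            = ∏ i : Fin d, ((if (ω i).1 then (1:ℤ) else -1) *
              (if i = l then (if (ω l).2.2 = γ l then 1 else s ((ω l).2.2)) else 1)) := by
              apply Finset.prod_congr rfl
              intro i _
              rw [hGval i true, hGval i false]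
              exact hD i
          _ = sgn (fun i => (ω i).1) * (if (ω l).2.2 = γ l then 1 else s ((ω l).2.2)) := by
              rw [Finset.prod_mul_distrib]
              congr 1
              rw [Finset.prod_ite_eq' Finset.univ l
                (fun _ => (if (ω l).2.2 = γ l then (1:ℤ) else s ((ω l).2.2)))]
              rw [if_pos (Finset.mem_univ l)]
      rw [hLHS2]
      have hRHS : ∑ v ∈ insert (γ l) (lineS k γ l), (if v = γ l then 1 else s v) *
            ∑ z : Fin d → Bool, sgn z *
              MvPolynomial.coeff (mono z (Function.update γ l v)) (MvPolynomial.monomial u a)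
          = (if (ω l).2.2 = γ l then 1 else s ((ω l).2.2)) * (sgn (fun i => (ω i).1) * a) := by
        rw [Finset.sum_eq_single_of_mem ((ω l).2.2) hv0L]
        · congr 1
          rw [Finset.sum_eq_single (fun i => (ω i).1)]
          · rw [MvPolynomial.coeff_monomial, if_pos hu_eq]
          · intro z _ hz2
            rw [MvPolynomial.coeff_monomial, if_neg, mul_zero]
            intro hc
            rw [hu_eq] at hc
            exact hz2 ((mono_inj hc).1.symm)
          · intro hmem
            exact absurd (Finset.mem_univ _) hmem
        · intro v hv hvne
          rw [mul_eq_zero]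
          right
          apply Finset.sum_eq_zero
          intro z _
          rw [MvPolynomial.coeff_monomial, if_neg, mul_zero]
          intro hc
          rw [hu_eq] at hc
          have h7 := (mono_inj hc).2
          have h8 := congrFun h7 l
          rw [Function.update_self, Function.update_self] at h8
          exact hvne h8.symm
      rw [hRHS]
      ring



lemma line_identity (k γ : Fin d → ℕ) (l : Fin d) (s : ℕ → ℤ)
    (hs : ∀ v ∈ lineS k γ l, s v = 1 ∨ s v = -1)
    (p : MvPolynomial (Bool × Fin d × ℕ) ℤ) (hdeg : p.totalDegree ≤ d) :
    ∑ ε : Fin d → Bool, sgn ε * MvPolynomial.eval (valF (lineSig k γ l s) ε) p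
      = ∑ v ∈ insert (γ l) (lineS k γ l), (if v = γ l then 1 else s v) *
          cc p (Function.update γ l v) := by
  classical
  have hrepr : ∑ m ∈ p.support, MvPolynomial.monomial m (p.coeff m) = p :=
    MvPolynomial.support_sum_monomial_coeff p
  calc ∑ ε : Fin d → Bool, sgn ε * MvPolynomial.eval (valF (lineSig k γ l s) ε) p
      = ∑ ε : Fin d → Bool, sgn ε * MvPolynomial.eval (valF (lineSig k γ l s) ε)
          (∑ m ∈ p.support, MvPolynomial.monomial m (p.coeff m)) := by rw [hrepr]
    _ = ∑ ε : Fin d → Bool, ∑ m ∈ p.support, sgn ε * MvPolynomial.eval (valF (lineSig k γ l s) ε)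
          (MvPolynomial.monomial m (p.coeff m)) := by
        apply Finset.sum_congr rfl
        intro ε _
        rw [map_sum, Finset.mul_sum]
    _ = ∑ m ∈ p.support, ∑ ε : Fin d → Bool, sgn ε * MvPolynomial.eval (valF (lineSig k γ l s) ε)
          (MvPolynomial.monomial m (p.coeff m)) := Finset.sum_comm
    _ = ∑ m ∈ p.support, ∑ v ∈ insert (γ l) (lineS k γ l), (if v = γ l then 1 else s v) *
          ∑ z : Fin d → Bool, sgn z *
            MvPolynomial.coeff (mono z (Function.update γ l v))
              (MvPolynomial.monomial m (p.coeff m)) := by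
        apply Finset.sum_congr rfl
        intro m hm
        exact ident_mono k γ l s hs m (p.coeff m)
          (le_trans (MvPolynomial.le_totalDegree hm) hdeg)
    _ = ∑ v ∈ insert (γ l) (lineS k γ l), ∑ m ∈ p.support, (if v = γ l then 1 else s v) *
          ∑ z : Fin d → Bool, sgn z *
            MvPolynomial.coeff (mono z (Function.update γ l v))
              (MvPolynomial.monomial m (p.coeff m)) := Finset.sum_comm
    _ = _ := by
        apply Finset.sum_congr rfl
        intro v _
        rw [← Finset.mul_sum]
        congr 1
        rw [Finset.sum_comm]
        unfold cc
        apply Finset.sum_congr rfl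
        intro z _
        rw [← Finset.mul_sum]
        congr 1
        calc ∑ m ∈ p.support, MvPolynomial.coeff (mono z (Function.update γ l v))
              (MvPolynomial.monomial m (p.coeff m))
            = MvPolynomial.coeff (mono z (Function.update γ l v))
              (∑ m ∈ p.support, MvPolynomial.monomial m (p.coeff m)) :=
              (MvPolynomial.coeff_sum _ _ _).symm
          _ = p.coeff (mono z (Function.update γ l v)) := by rw [hrepr]


/-! ### The main line inequality (proved via the gate) -/

lemma line_main (hd : 0 < d) (k : Fin d → ℕ)
    (f : (Fin d → ℕ → ℤ) → (Fin d → ℕ → ℤ) → ℤ) (hf : IsSnakeGT k f)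
    (p : MvPolynomial (Bool × Fin d × ℕ) ℤ) (hp : IsGateXY p f)
    (hdeg : p.totalDegree ≤ d) (γ : Fin d → ℕ) (hγ : Good k γ) (l : Fin d)
    (s : ℕ → ℤ) (hs : ∀ v ∈ lineS k γ l, s v = 1 ∨ s v = -1) :
    (2:ℤ)^(d-1) ≤ cc p γ + ∑ v ∈ lineS k γ l, s v * cc p (Function.update γ l v) := by
  classical
  have hgb := fun ε => gate_bounds hd k f hf p hp γ hγ l s hs ε
  have hlow : (2:ℤ)^(d-1) ≤ ∑ ε : Fin d → Bool,
      sgn ε * MvPolynomial.eval (valF (lineSig k γ l s) ε) p := by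
    have hsplit := Finset.sum_filter_add_sum_filter_not (Finset.univ : Finset (Fin d → Bool))
      (fun ε => sgn ε = 1) (fun ε => sgn ε * MvPolynomial.eval (valF (lineSig k γ l s) ε) p)
    have h1 : 0 ≤ ∑ ε ∈ Finset.univ.filter (fun ε => sgn ε = 1),
        sgn ε * MvPolynomial.eval (valF (lineSig k γ l s) ε) p := by
      apply Finset.sum_nonneg
      intro ε hε
      rw [Finset.mem_filter] at hε
      rw [hε.2, one_mul]
      exact (hgb ε).1 hε.2
    have h2 : (2:ℤ)^(d-1) ≤ ∑ ε ∈ Finset.univ.filter (fun ε => ¬ sgn ε = 1),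
        sgn ε * MvPolynomial.eval (valF (lineSig k γ l s) ε) p := by
      have hdich : (Finset.univ : Finset (Fin d → Bool)).filter (fun ε => ¬ sgn ε = 1)
          = (Finset.univ : Finset (Fin d → Bool)).filter (fun ε => sgn ε = -1) := by
        apply Finset.filter_congr
        intro ε _
        rcases sgn_cases ε with h | h <;> simp [h]
      rw [hdich]
      have hterm : ∀ ε ∈ (Finset.univ : Finset (Fin d → Bool)).filter (fun ε => sgn ε = -1),
          (1:ℤ) ≤ sgn ε * MvPolynomial.eval (valF (lineSig k γ l s) ε) p := by
        intro ε hε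
        rw [Finset.mem_filter] at hε
        have he := (hgb ε).2 hε.2
        rw [hε.2]
        nlinarith
      have hnsmul := Finset.card_nsmul_le_sum
        ((Finset.univ : Finset (Fin d → Bool)).filter (fun ε => sgn ε = -1))
        (fun ε => sgn ε * MvPolynomial.eval (valF (lineSig k γ l s) ε) p) 1 hterm
      rw [count_neg hd] at hnsmul
      have hcast : (2^(d-1) : ℕ) • (1:ℤ) = (2:ℤ)^(d-1) := by
        rw [nsmul_eq_mul, mul_one]
        push_cast
        rfl
      rw [hcast] at hnsmul
      exact hnsmul
    omega
  have hid := line_identity k γ l s hs p hdeg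
  rw [hid] at hlow
  rw [Finset.sum_insert (self_not_mem_lineS k γ l)] at hlow
  rw [if_pos rfl, one_mul, Function.update_eq_self] at hlow
  have hfix : ∑ v ∈ lineS k γ l, (if v = γ l then 1 else s v) * cc p (Function.update γ l v)
      = ∑ v ∈ lineS k γ l, s v * cc p (Function.update γ l v) := by
    apply Finset.sum_congr rfl
    intro v hv
    have hvne : ¬ v = γ l := by
      intro hc
      rw [hc] at hv
      exact self_not_mem_lineS k γ l hv
    rw [if_neg hvne]
  rw [hfix] at hlow
  exact hlow

lemma line_abs (hd : 0 < d) (k : Fin d → ℕ)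
    (f : (Fin d → ℕ → ℤ) → (Fin d → ℕ → ℤ) → ℤ) (hf : IsSnakeGT k f)
    (p : MvPolynomial (Bool × Fin d × ℕ) ℤ) (hp : IsGateXY p f)
    (hdeg : p.totalDegree ≤ d) (γ : Fin d → ℕ) (hγ : Good k γ) (l : Fin d) :
    (2:ℤ)^(d-1) + ∑ v ∈ lineS k γ l, |cc p (Function.update γ l v)| ≤ cc p γ := by
  classical
  set s : ℕ → ℤ := fun v => if 0 ≤ cc p (Function.update γ l v) then -1 else 1 with hs_def
  have hs : ∀ v ∈ lineS k γ l, s v = 1 ∨ s v = -1 := by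
    intro v _
    by_cases h : 0 ≤ cc p (Function.update γ l v) <;> simp [hs_def, h]
  have key := line_main hd k f hf p hp hdeg γ hγ l s hs
  have : ∑ v ∈ lineS k γ l, s v * cc p (Function.update γ l v) =
      -∑ v ∈ lineS k γ l, |cc p (Function.update γ l v)| := by
    rw [← Finset.sum_neg_distrib]
    apply Finset.sum_congr rfl
    intro v _
    by_cases h : 0 ≤ cc p (Function.update γ l v)
    · rw [hs_def]; simp only [if_pos h]; rw [abs_of_nonneg h]; ring
    · rw [hs_def]; simp only [if_neg h]; rw [abs_of_neg (by omega)]; ring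
  rw [this] at key
  omega

/-! ### Telescoping and geometric sums -/

lemma telescope (c : ℕ → ℕ) : ∀ b, (∀ j, j < b → 1 ≤ c j) → ∀ a,
    ∑ j ∈ Finset.Ico a b, (c j - 1) * ∏ x ∈ Finset.Ico (j+1) b, c x
      = (∏ j ∈ Finset.Ico a b, c j) - 1 := by
  intro b
  induction b with
  | zero =>
    intro _ a
    rw [Finset.Ico_eq_empty (by omega)]
    simp
  | succ m ih =>
    intro hc a
    by_cases hab : a ≤ m
    · rw [Finset.sum_Ico_succ_top hab, Finset.prod_Ico_succ_top hab]
      have hstep : ∀ j ∈ Finset.Ico a m, (c j - 1) * ∏ x ∈ Finset.Ico (j+1) (m+1), c x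
          = ((c j - 1) * ∏ x ∈ Finset.Ico (j+1) m, c x) * c m := by
        intro j hj
        rw [Finset.mem_Ico] at hj
        rw [Finset.prod_Ico_succ_top (by omega), mul_assoc]
      rw [Finset.sum_congr rfl hstep, ← Finset.sum_mul, ih (fun j hj => hc j (by omega)) a]
      have hP : 1 ≤ ∏ j ∈ Finset.Ico a m, c j :=
        Finset.one_le_prod' (fun j hj => hc j (by rw [Finset.mem_Ico] at hj; omega))
      have hIco : Finset.Ico (m+1) (m+1) = ∅ := by simp
      rw [hIco]
      simp only [Finset.prod_empty, mul_one]
      have hcm : 1 ≤ c m := hc m (by omega)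
      obtain ⟨t, ht⟩ := Nat.exists_eq_add_of_le hP
      rw [ht]
      have h1 : 1 + t - 1 = t := by omega
      rw [h1, add_mul, one_mul]
      set q := t * c m
      omega
    · have he : Finset.Ico a (m+1) = ∅ := Finset.Ico_eq_empty (by omega)
      rw [he]
      simp

lemma pow_sum_geom (E : ℕ) : ∀ m, 2 ≤ m →
    (2:ℤ)^(E + (m - 2)) ≤ ∑ j ∈ Finset.Icc 1 (m-1), (2:ℤ)^(E + (j - 2)) := by
  intro m
  induction m with
  | zero => omega
  | succ n ih =>
    intro _
    by_cases hn : 2 ≤ n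
    · have hins : Finset.Icc 1 (n+1-1) = insert n (Finset.Icc 1 (n-1)) := by
        ext x
        simp only [Finset.mem_Icc, Finset.mem_insert]
        omega
      have hnm : n ∉ Finset.Icc 1 (n-1) := by
        simp only [Finset.mem_Icc]
        omega
      rw [hins, Finset.sum_insert hnm]
      have h1 : E + (n + 1 - 2) = (E + (n - 2)) + 1 := by omega
      rw [h1, pow_succ]
      have h2 := ih hn
      have h3 : (0:ℤ) < 2 ^ (E + (n - 2)) := by positivity
      linarith
    · have hn1 : n = 1 := by omega
      subst hn1
      norm_num

/-! ### Prefix rank and the measure -/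

def phiF (par kl : ℕ) : ℕ → ℕ := fun j => if par = 1 then j else kl + 1 - j

def RP (k γ : Fin d → ℕ) : ℕ :=
  ∑ l ∈ Finset.range (d-1), (NumF k γ l - 1) * ∏ j ∈ Finset.Ico (l+1) (d-1), extFun k j

def mu (k γ : Fin d → ℕ) : ℕ := RP k γ * extFun k (d-1) + NumF k γ (d-1)

lemma ParF_le_one (k γ : Fin d → ℕ) (l : ℕ) : ParF k γ l ≤ 1 := by
  unfold ParF
  cases l with
  | zero => exact le_refl 1
  | succ n =>
    show (if snakePar (extFun k) (extFun γ) n = 1 then _ else _) % 2 ≤ 1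
    omega

lemma ParF_succ (k γ : Fin d → ℕ) (l : ℕ) : ParF k γ (l+1) = NumF k γ l % 2 := rfl

lemma num_flip {k γ β : Fin d → ℕ} (i : Fin d) (hval : β i = γ i)
    (hb : 1 ≤ γ i ∧ γ i ≤ k i)
    (hpar : ParF k β (i:ℕ) + ParF k γ (i:ℕ) = 1) :
    NumF k β (i:ℕ) + NumF k γ (i:ℕ) = k i + 1 := by
  rw [NumF_def, NumF_def, hval]
  rcases Nat.lt_or_ge (ParF k β (i:ℕ)) 1 with h | h
  · have h1 : ParF k β (i:ℕ) ≠ 1 := by omega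
    have h2 : ParF k γ (i:ℕ) = 1 := by omega
    rw [if_neg h1, if_pos h2]
    omega
  · have h1 : ParF k β (i:ℕ) = 1 := le_antisymm (ParF_le_one k β _) h
    have h2 : ParF k γ (i:ℕ) ≠ 1 := by omega
    rw [if_pos h1, if_neg h2]
    omega

/-! ### The main inductive claim -/

lemma main_claim (hd : 0 < d) (k : Fin d → ℕ)
    (hk : ∀ i : Fin d, (i : ℕ) < d - 1 → 2 ≤ k i ∧ Even (k i))
    (f : (Fin d → ℕ → ℤ) → (Fin d → ℕ → ℤ) → ℤ) (hf : IsSnakeGT k f)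
    (p : MvPolynomial (Bool × Fin d × ℕ) ℤ) (hp : IsGateXY p f)
    (hdeg : p.totalDegree ≤ d) :
    ∀ N γ, Good k γ → mu k γ ≤ N →
    (2:ℤ) ^ (d - 1 + ((extFun k (d-1) - 2) * RP k γ + (NumF k γ (d-1) - 2))) ≤ cc p γ := by
  classical
  have hlastlt : d - 1 < d := by omega
  set last : Fin d := ⟨d-1, hlastlt⟩ with hlast
  intro N
  induction N with
  | zero =>
    intro γ hγ hμ
    have := (NumF_bounds hγ last).1
    have : 1 ≤ NumF k γ (d-1) := this
    unfold mu at hμ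
    omega
  | succ N ih =>
    intro γ hγ hμ
    have hmb := NumF_bounds hγ last
    have hmb' : 1 ≤ NumF k γ (d-1) ∧ NumF k γ (d-1) ≤ k last := hmb
    have hkl : extFun k (d-1) = k last := extFun_lt k hlastlt
    by_cases hm2 : 2 ≤ NumF k γ (d-1)
    · -- within-column case
      set m := NumF k γ (d-1) with hm
      set E0 := d - 1 + (extFun k (d-1) - 2) * RP k γ with hE0
      have habs := line_abs hd k f hf p hp hdeg γ hγ last
      -- the injection from Icc 1 (m-1) into lineS
      set φ : ℕ → ℕ := phiF (ParF k γ (d-1)) (k last) with hφ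
      have hmlek : m ≤ k last := hmb'.2
      have hφval : ∀ j, φ j = if ParF k γ (d-1) = 1 then j else k last + 1 - j := by
        intro j; rw [hφ]; rfl
      have hlv : ((last : Fin d) : ℕ) = d - 1 := rfl
      have hφnum : ∀ j, 1 ≤ j → j ≤ k last →
          NumF k (Function.update γ last (φ j)) (d-1) = j := by
        intro j h1 h2
        rw [hφval j]
        have h3 := NumF_update_self k γ last (if ParF k γ (d - 1) = 1 then j else k last + 1 - j)
        rw [hlv] at h3
        rw [h3]
        by_cases hpar : ParF k γ (d-1) = 1
        · rw [if_pos hpar, if_pos hpar]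
        · rw [if_neg hpar, if_neg hpar]
          omega
      have hφmem : ∀ j ∈ Finset.Icc 1 (m-1), φ j ∈ lineS k γ last := by
        intro j hj
        rw [Finset.mem_Icc] at hj
        have hjk : j ≤ k last := by omega
        unfold lineS
        rw [Finset.mem_filter, Finset.mem_Icc]
        refine ⟨⟨?_, ?_⟩, ?_⟩
        · rw [hφval]; split <;> omega
        · rw [hφval]; split <;> omega
        · rw [hlv, hφnum j hj.1 hjk]
          omega
      have hφinj : ∀ j ∈ Finset.Icc 1 (m-1), ∀ j' ∈ Finset.Icc 1 (m-1),
          φ j = φ j' → j = j' := by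
        intro j hj j' hj' he
        rw [Finset.mem_Icc] at hj hj'
        rw [hφval, hφval] at he
        split at he <;> omega
      -- per-element bound from the induction hypothesis
      have hper : ∀ v ∈ lineS k γ last,
          (2:ℤ) ^ (E0 + (NumF k (Function.update γ last v) (d-1) - 2))
            ≤ |cc p (Function.update γ last v)| := by
        intro v hv
        unfold lineS at hv
        rw [Finset.mem_filter, Finset.mem_Icc] at hv
        set γ' := Function.update γ last v with hγ'
        have hgood : Good k γ' := by
          intro i
          by_cases hi : i = last
          · rw [hγ', hi, Function.update_self]; exact hv.1
          · rw [hγ', Function.update_of_ne hi]; exact hγ i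
        have hRP : RP k γ' = RP k γ := by
          unfold RP
          apply Finset.sum_congr rfl
          intro l hl
          rw [Finset.mem_range] at hl
          rw [NumF_update_lt k γ last v (by exact hl)]
        have hnum' : NumF k γ' (d-1) < m := hv.2
        have hnum1 : 1 ≤ NumF k γ' (d-1) := (NumF_bounds hgood last).1
        have hmu : mu k γ' ≤ N := by
          unfold mu at hμ ⊢
          rw [hRP]
          omega
        have := ih γ' hgood hmu
        rw [hRP] at this
        calc (2:ℤ) ^ (E0 + (NumF k γ' (d-1) - 2))
            = 2 ^ (d - 1 + ((extFun k (d-1) - 2) * RP k γ + (NumF k γ' (d-1) - 2))) := by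
              rw [hE0, add_assoc]
          _ ≤ cc p γ' := this
          _ ≤ |cc p γ'| := le_abs_self _
      -- chain the three estimates
      have step1 : ∑ j ∈ Finset.Icc 1 (m-1), (2:ℤ) ^ (E0 + (j - 2))
          ≤ ∑ v ∈ lineS k γ last, |cc p (Function.update γ last v)| := by
        have : ∑ j ∈ Finset.Icc 1 (m-1), (2:ℤ) ^ (E0 + (j - 2))
            = ∑ j ∈ Finset.Icc 1 (m-1),
                (2:ℤ) ^ (E0 + (NumF k (Function.update γ last (φ j)) (d-1) - 2)) := by
          apply Finset.sum_congr rfl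
          intro j hj
          rw [Finset.mem_Icc] at hj
          rw [hφnum j hj.1 (by omega)]
        rw [this]
        calc ∑ j ∈ Finset.Icc 1 (m-1),
              (2:ℤ) ^ (E0 + (NumF k (Function.update γ last (φ j)) (d-1) - 2))
            ≤ ∑ j ∈ Finset.Icc 1 (m-1), |cc p (Function.update γ last (φ j))| := by
              apply Finset.sum_le_sum
              intro j hj
              exact hper (φ j) (hφmem j hj)
          _ = ∑ v ∈ (Finset.Icc 1 (m-1)).image φ, |cc p (Function.update γ last v)| := by
              rw [Finset.sum_image hφinj]
          _ ≤ ∑ v ∈ lineS k γ last, |cc p (Function.update γ last v)| := by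
              apply Finset.sum_le_sum_of_subset_of_nonneg
              · intro v hv
                rw [Finset.mem_image] at hv
                obtain ⟨j, hj, rfl⟩ := hv
                exact hφmem j hj
              · intro v _ _
                exact abs_nonneg _
      have step2 := pow_sum_geom E0 m hm2
      have target_eq : d - 1 + ((extFun k (d-1) - 2) * RP k γ + (m - 2))
          = E0 + (m - 2) := by rw [hE0, add_assoc]
      rw [target_eq]
      calc (2:ℤ) ^ (E0 + (m-2)) ≤ ∑ j ∈ Finset.Icc 1 (m-1), (2:ℤ) ^ (E0 + (j - 2)) := step2
        _ ≤ ∑ v ∈ lineS k γ last, |cc p (Function.update γ last v)| := step1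
        _ ≤ cc p γ := by
            have h2 : (0:ℤ) ≤ 2^(d-1) := by positivity
            omega
    · -- m = 1
      have hm1 : NumF k γ (d-1) = 1 := by omega
      by_cases hR : RP k γ = 0
      · have habs := line_abs hd k f hf p hp hdeg γ hγ last
        have hnn : 0 ≤ ∑ v ∈ lineS k γ last, |cc p (Function.update γ last v)| :=
          Finset.sum_nonneg fun v _ => abs_nonneg _
        rw [hR, hm1]
        simpa using le_trans (by omega : (2:ℤ)^(d-1) ≤ 2^(d-1) +
          ∑ v ∈ lineS k γ last, |cc p (Function.update γ last v)|) habs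
      · -- carry case
        set F := (Finset.range (d-1)).filter (fun l => 2 ≤ NumF k γ l) with hF
        have hFne : F.Nonempty := by
          by_contra hne
          rw [Finset.not_nonempty_iff_eq_empty] at hne
          apply hR
          unfold RP
          apply Finset.sum_eq_zero
          intro l hl
          have hld : l < d := by rw [Finset.mem_range] at hl; omega
          have h1 : 1 ≤ NumF k γ l := (NumF_bounds hγ ⟨l, hld⟩).1
          have h2 : ¬ 2 ≤ NumF k γ l := by
            intro h2
            have hmem : l ∈ F := by rw [hF, Finset.mem_filter]; exact ⟨hl, h2⟩
            rw [hne] at hmem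
            exact absurd hmem (Finset.notMem_empty l)
          have h0 : NumF k γ l - 1 = 0 := by omega
          rw [h0, zero_mul]
        set ls := F.max' hFne with hls
        have hlsF : ls ∈ F := F.max'_mem hFne
        have hlsd : ls < d - 1 ∧ 2 ≤ NumF k γ ls := by
          rw [hF, Finset.mem_filter, Finset.mem_range] at hlsF
          exact hlsF
        have hmax : ∀ j, ls < j → j < d - 1 → NumF k γ j = 1 := by
          intro j hj1 hj2
          by_contra hne
          have hjd : j < d := by omega
          have h1 : 1 ≤ NumF k γ j := (NumF_bounds hγ ⟨j, hjd⟩).1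
          have h2 : 2 ≤ NumF k γ j := by omega
          have hmem : j ∈ F := by
            rw [hF, Finset.mem_filter, Finset.mem_range]; exact ⟨hj2, h2⟩
          have := F.le_max' j hmem
          omega
        set L : Fin d := ⟨ls, by omega⟩ with hLdef
        set ν := NumF k γ ls - 1 with hν
        have hν1 : 1 ≤ ν := by omega
        have hνk : ν + 1 ≤ k L := by
          have hb := (NumF_bounds hγ L).2
          have hb' : NumF k γ ls ≤ k L := hb
          omega
        set v' := if ParF k γ ls = 1 then ν else k L + 1 - ν with hv'
        have hv'b : 1 ≤ v' ∧ v' ≤ k L := by rw [hv']; split <;> omega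
        set β := Function.update γ L v' with hβ
        have hβgood : Good k β := by
          intro i
          by_cases hi : i = L
          · rw [hβ, hi, Function.update_self]; exact hv'b
          · rw [hβ, Function.update_of_ne hi]; exact hγ i
        have hβnum_ls : NumF k β ls = ν := by
          have h3 := NumF_update_self k γ L v'
          have h3' : NumF k (Function.update γ L v') ls
              = if ParF k γ ls = 1 then v' else k L + 1 - v' := h3
          rw [hβ, h3', hv']
          by_cases hpar : ParF k γ ls = 1
          · rw [if_pos hpar, if_pos hpar]
          · rw [if_neg hpar, if_neg hpar]; omega
        have hβnum_lt : ∀ j, j < ls → NumF k β j = NumF k γ j := by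
          intro j hj
          rw [hβ]
          exact NumF_update_lt k γ L v' hj
        have hflip : ∀ t, ls + 1 ≤ t → t ≤ d - 1 → ParF k β t + ParF k γ t = 1 := by
          intro t ht1
          induction t, ht1 using Nat.le_induction with
          | base =>
            intro _
            rw [ParF_succ, ParF_succ, hβnum_ls]
            have hg : NumF k γ ls = ν + 1 := by omega
            rw [hg]
            omega
          | succ t ht ih2 =>
            intro ht2
            have htd1 : t < d - 1 := by omega
            have htd : t < d := by omega
            have hpar := ih2 (by omega)
            have htg : NumF k γ t = 1 := hmax t (by omega) htd1
            have htval : β ⟨t, htd⟩ = γ ⟨t, htd⟩ := by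
              rw [hβ]
              apply Function.update_of_ne
              intro hc
              have : t = ls := congrArg Fin.val hc
              omega
            have hsum := num_flip (k := k) ⟨t, htd⟩ htval (hγ _) hpar
            have hsum' : NumF k β t + NumF k γ t = k ⟨t, htd⟩ + 1 := hsum
            have hβt : NumF k β t = k ⟨t, htd⟩ := by omega
            have heven : Even (k ⟨t, htd⟩) := (hk ⟨t, htd⟩ htd1).2
            rw [ParF_succ, ParF_succ, hβt, htg]
            rw [Nat.even_iff] at heven
            omega
        have hlastne : last ≠ L := by
          intro hc
          have : d - 1 = ls := congrArg Fin.val hc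
          omega
        have hβnum_last : NumF k β (d-1) = k last := by
          have hp := hflip (d-1) (by omega) le_rfl
          have hval : β last = γ last := by
            rw [hβ]; exact Function.update_of_ne hlastne v' γ
          have hsum := num_flip (k := k) last hval (hγ last) hp
          have hsum' : NumF k β (d-1) + NumF k γ (d-1) = k last + 1 := hsum
          omega
        have hβtail : ∀ l, ls + 1 ≤ l → l < d - 1 → NumF k β l = extFun k l := by
          intro l h1 h2
          have hld : l < d := by omega
          have hp := hflip l h1 (by omega)
          have hval : β ⟨l, hld⟩ = γ ⟨l, hld⟩ := by
            rw [hβ]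
            apply Function.update_of_ne
            intro hc
            have : l = ls := congrArg Fin.val hc
            omega
          have hsum := num_flip (k := k) ⟨l, hld⟩ hval (hγ _) hp
          have hsum' : NumF k β l + NumF k γ l = k ⟨l, hld⟩ + 1 := hsum
          have hg1 : NumF k γ l = 1 := hmax l (by omega) h2
          rw [extFun_lt k hld]
          omega
        have hposk : ∀ j, j < d - 1 → 1 ≤ extFun k j := by
          intro j hj
          have hjd : j < d := by omega
          rw [extFun_lt k hjd]
          exact le_trans (by omega) (hk ⟨j, hjd⟩ hj).1
        set W := ∏ j ∈ Finset.Ico (ls+1) (d-1), extFun k j with hW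
        have hW1 : 1 ≤ W := by
          rw [hW]
          apply Finset.one_le_prod'
          intro j hj
          rw [Finset.mem_Ico] at hj
          exact hposk j hj.2
        have hsplit : ∀ (δ : Fin d → ℕ), RP k δ =
            (∑ l ∈ Finset.Ico 0 ls, (NumF k δ l - 1) * ∏ j ∈ Finset.Ico (l+1) (d-1), extFun k j)
            + ((NumF k δ ls - 1) * W
              + ∑ l ∈ Finset.Ico (ls+1) (d-1),
                  (NumF k δ l - 1) * ∏ j ∈ Finset.Ico (l+1) (d-1), extFun k j) := by
          intro δ
          unfold RP
          rw [Finset.range_eq_Ico,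
            ← Finset.sum_Ico_consecutive _ (Nat.zero_le ls) (show ls ≤ d-1 by omega),
            Finset.sum_eq_sum_Ico_succ_bot (show ls < d - 1 by omega)]
        have hpre : ∑ l ∈ Finset.Ico 0 ls, (NumF k β l - 1) * ∏ j ∈ Finset.Ico (l+1) (d-1), extFun k j
            = ∑ l ∈ Finset.Ico 0 ls, (NumF k γ l - 1) * ∏ j ∈ Finset.Ico (l+1) (d-1), extFun k j := by
          apply Finset.sum_congr rfl
          intro l hl
          rw [Finset.mem_Ico] at hl
          rw [hβnum_lt l hl.2]
        have hγtail : ∑ l ∈ Finset.Ico (ls+1) (d-1),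
            (NumF k γ l - 1) * ∏ j ∈ Finset.Ico (l+1) (d-1), extFun k j = 0 := by
          apply Finset.sum_eq_zero
          intro l hl
          rw [Finset.mem_Ico] at hl
          rw [hmax l (by omega) hl.2]
          simp
        have hβtailsum : ∑ l ∈ Finset.Ico (ls+1) (d-1),
            (NumF k β l - 1) * ∏ j ∈ Finset.Ico (l+1) (d-1), extFun k j = W - 1 := by
          rw [hW]
          rw [← telescope (extFun k) (d-1) hposk (ls+1)]
          apply Finset.sum_congr rfl
          intro l hl
          rw [Finset.mem_Ico] at hl
          rw [hβtail l hl.1 hl.2]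
        have hRP : RP k γ = RP k β + 1 := by
          have hg := hsplit γ
          have hb := hsplit β
          rw [hpre, hβtailsum, hβnum_ls] at hb
          rw [hγtail] at hg
          have hgd : NumF k γ ls - 1 = ν := rfl
          rw [hgd] at hg
          have hm1' : (ν - 1) * W = ν * W - W := Nat.sub_mul ν 1 W |>.trans (by rw [one_mul])
          have hm2' : W ≤ ν * W := Nat.le_mul_of_pos_left W (by omega)
          omega
        have hmuβ : mu k β ≤ N := by
          unfold mu at hμ ⊢
          rw [hβnum_last, ← hkl, hm1] at *
          have h1 : RP k β * extFun k (d-1) + extFun k (d-1) = RP k γ * extFun k (d-1) := by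
            rw [hRP, add_mul, one_mul]
          omega
        have hchain := ih β hβgood hmuβ
        have hexp : d - 1 + ((extFun k (d-1) - 2) * RP k γ + (NumF k γ (d-1) - 2))
            = d - 1 + ((extFun k (d-1) - 2) * RP k β + (NumF k β (d-1) - 2)) := by
          rw [hβnum_last, ← hkl, hm1, hRP]
          have hmul : (extFun k (d-1) - 2) * (RP k β + 1)
              = (extFun k (d-1) - 2) * RP k β + (extFun k (d-1) - 2) := by ring
          rw [hmul]
          omega
        have habs := line_abs hd k f hf p hp hdeg γ hγ L
        have hv'S : v' ∈ lineS k γ L := by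
          unfold lineS
          rw [Finset.mem_filter, Finset.mem_Icc]
          refine ⟨⟨hv'b.1, hv'b.2⟩, ?_⟩
          show NumF k (Function.update γ L v') ls < NumF k γ ls
          rw [← hβ, hβnum_ls]
          omega
        have hsingle : |cc p (Function.update γ L v')| ≤
            ∑ v ∈ lineS k γ L, |cc p (Function.update γ L v)| :=
          Finset.single_le_sum (f := fun v => |cc p (Function.update γ L v)|)
            (fun v _ => abs_nonneg _) hv'S
        rw [← hβ] at hsingle
        calc (2:ℤ) ^ (d - 1 + ((extFun k (d-1) - 2) * RP k γ + (NumF k γ (d-1) - 2)))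
            = 2 ^ (d - 1 + ((extFun k (d-1) - 2) * RP k β + (NumF k β (d-1) - 2))) := by
              rw [hexp]
          _ ≤ cc p β := hchain
          _ ≤ |cc p β| := le_abs_self _
          _ ≤ cc p γ := by
              have h2 : (0:ℤ) ≤ (2:ℤ)^(d-1) := by positivity
              omega

/-! ### Existence of the top element -/

lemma exists_top (k : Fin d → ℕ) (hpos : ∀ i, 1 ≤ k i) :
    ∃ γ, Good k γ ∧ ∀ l : Fin d, NumF k γ (l : ℕ) = k l := by
  classical
  suffices h : ∀ t, t ≤ d → ∃ γ, Good k γ ∧ ∀ l : Fin d, (l:ℕ) < t → NumF k γ (l:ℕ) = k l by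
    obtain ⟨γ, hγ, hn⟩ := h d le_rfl
    exact ⟨γ, hγ, fun l => hn l l.isLt⟩
  intro t
  induction t with
  | zero =>
    exact fun _ => ⟨fun _ => 1, fun i => ⟨le_rfl, hpos i⟩, fun l hl => absurd hl (by omega)⟩
  | succ n ihn =>
    intro hn1
    obtain ⟨γ, hγ, hnum⟩ := ihn (by omega)
    have hnd : n < d := by omega
    set i : Fin d := ⟨n, hnd⟩ with hi
    set w := if ParF k γ n = 1 then k i else 1 with hw
    have hwb : 1 ≤ w ∧ w ≤ k i := by
      have := hpos i
      rw [hw]; split <;> omega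
    refine ⟨Function.update γ i w, ?_, ?_⟩
    · intro j
      by_cases hj : j = i
      · rw [hj, Function.update_self]; exact hwb
      · rw [Function.update_of_ne hj]; exact hγ j
    · intro l hl
      by_cases hl' : (l:ℕ) < n
      · rw [NumF_update_lt k γ i w hl']
        exact hnum l hl'
      · have hln : (l:ℕ) = n := by omega
        have hli : l = i := Fin.ext hln
        have hgoal : NumF k (Function.update γ i w) n = k i := by
          have h3 : NumF k (Function.update γ i w) n
              = if ParF k γ n = 1 then w else k i + 1 - w := NumF_update_self k γ i w
          rw [h3, hw]
          by_cases hpar : ParF k γ n = 1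
          · rw [if_pos hpar, if_pos hpar]
          · rw [if_neg hpar, if_neg hpar]
            have := hpos i
            omega
        rw [hln, hli]
        exact hgoal

/-! ### Weight bound -/

lemma abs_cc_le_wt (p : MvPolynomial (Bool × Fin d × ℕ) ℤ) (γ : Fin d → ℕ) :
    |cc p γ| ≤ wt p := by
  classical
  have h1 : |cc p γ| ≤ ∑ z : Fin d → Bool, |sgn z * p.coeff (mono z γ)| :=
    Finset.abs_sum_le_sum_abs _ _
  have h2 : ∀ z : Fin d → Bool, |sgn z * p.coeff (mono z γ)| = |p.coeff (mono z γ)| := by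
    intro z
    rw [abs_mul]
    rcases sgn_cases z with h | h <;> rw [h] <;> simp
  rw [Finset.sum_congr rfl (fun z _ => h2 z)] at h1
  refine le_trans h1 ?_
  unfold wt
  have hside : ∀ z ∈ (Finset.univ : Finset (Fin d → Bool)),
      |p.coeff (mono z γ)| ≠ 0 → mono z γ ∈ p.support := by
    intro z _ hz
    rw [MvPolynomial.mem_support_iff]
    intro hc
    exact hz (by rw [hc]; simp)
  rw [← Finset.sum_filter_of_ne hside]
  have h3 : ∑ z ∈ Finset.univ.filter (fun z => mono z γ ∈ p.support), |p.coeff (mono z γ)|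
      = ∑ m ∈ (Finset.univ.filter (fun z => mono z γ ∈ p.support)).image
          (fun z => mono z γ), |p.coeff m| := by
    rw [Finset.sum_image]
    intro z _ z' _ he
    exact (mono_inj he).1
  rw [h3]
  apply Finset.sum_le_sum_of_subset_of_nonneg
  · intro m hm
    rw [Finset.mem_image] at hm
    obtain ⟨z, hz, rfl⟩ := hm
    rw [Finset.mem_filter] at hz
    exact hz.2
  · intro m _ _
    exact abs_nonneg _

lemma prod_bridge (hd : 0 < d) (k : Fin d → ℕ) :
    (∏ i ∈ Finset.univ.filter (fun i : Fin d => (i : ℕ) < d - 1), k i)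
      = ∏ l ∈ Finset.range (d-1), extFun k l := by
  classical
  rw [Finset.prod_filter]
  have h1 : ∀ i : Fin d, (if (i:ℕ) < d - 1 then k i else 1)
      = (fun l => if l < d - 1 then extFun k l else 1) (i : ℕ) := by
    intro i
    by_cases hi : (i:ℕ) < d - 1
    · simp only [if_pos hi]
      rw [extFun_lt k i.isLt]
    · simp only [if_neg hi]
  rw [Finset.prod_congr rfl (fun i _ => h1 i)]
  rw [Fin.prod_univ_eq_prod_range (fun l => if l < d - 1 then extFun k l else 1) d]
  obtain ⟨e, rfl⟩ : ∃ e, d = e + 1 := ⟨d - 1, by omega⟩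
  simp only [Nat.add_sub_cancel]
  rw [Finset.prod_range_succ, if_neg (lt_irrefl e), mul_one]
  apply Finset.prod_congr rfl
  intro l hl
  rw [Finset.mem_range] at hl
  rw [if_pos hl]

end Stmt16Aux

/-- Main theorem: if `k_i ≥ 2` is even for `i < d` and `k_d ≥ 3`, then every threshold gate
of degree at most `d` for the `d`-dimensional GT generalization `f` has weight at least
`2^((k_d - 2) · Π_{i<d} k_i - d)`. -/
theorem stmt16 (d : ℕ) (hd : 0 < d) (k : Fin d → ℕ)
    (hk : ∀ i : Fin d, (i : ℕ) < d - 1 → 2 ≤ k i ∧ Even (k i))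
    (hkd : 3 ≤ k ⟨d - 1, by omega⟩)
    (f : (Fin d → ℕ → ℤ) → (Fin d → ℕ → ℤ) → ℤ) (hf : IsSnakeGT k f) :
    ∀ p : MvPolynomial (Bool × Fin d × ℕ) ℤ, IsGateXY p f → p.totalDegree ≤ d →
      (2 : ℤ) ^ ((k ⟨d - 1, by omega⟩ - 2) *
          (∏ i ∈ Finset.univ.filter fun i : Fin d => (i : ℕ) < d - 1, k i) - d) ≤ wt p := by
  classical
  intro p hp hdeg
  have hd1 : d - 1 < d := by omega
  have hkd' : 3 ≤ k ⟨d - 1, hd1⟩ := hkd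
  have hpos : ∀ i : Fin d, 1 ≤ k i := by
    intro i
    by_cases hi : (i:ℕ) < d - 1
    · exact le_trans (by omega) (hk i hi).1
    · have hie : i = ⟨d-1, hd1⟩ := Fin.ext (by
        show (i:ℕ) = d - 1
        have := i.isLt
        omega)
      rw [hie]
      exact le_trans (by omega : (1:ℕ) ≤ 3) hkd'
  obtain ⟨γ, hγ, hnum⟩ := Stmt16Aux.exists_top k hpos
  have hmain := Stmt16Aux.main_claim hd k hk f hf p hp hdeg (Stmt16Aux.mu k γ) γ hγ le_rfl
  have hkl : extFun k (d-1) = k ⟨d-1, hd1⟩ := Stmt16Aux.extFun_lt k hd1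
  have hnum_last : Stmt16Aux.NumF k γ (d-1) = k ⟨d-1, hd1⟩ := hnum ⟨d-1, hd1⟩
  have hposk : ∀ j, j < d - 1 → 1 ≤ extFun k j := by
    intro j hj
    have hjd : j < d := by omega
    rw [Stmt16Aux.extFun_lt k hjd]
    exact hpos _
  have hRP : Stmt16Aux.RP k γ = (∏ l ∈ Finset.range (d-1), extFun k l) - 1 := by
    unfold Stmt16Aux.RP
    rw [Finset.range_eq_Ico]
    rw [← Stmt16Aux.telescope (extFun k) (d-1) hposk 0]
    apply Finset.sum_congr rfl
    intro l hl
    rw [Finset.mem_Ico] at hl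
    have hld : l < d := by omega
    have h5 : Stmt16Aux.NumF k γ l = k ⟨l, hld⟩ := hnum ⟨l, hld⟩
    rw [h5, Stmt16Aux.extFun_lt k hld]
  have hP1 : 1 ≤ ∏ l ∈ Finset.range (d-1), extFun k l := by
    apply Finset.one_le_prod'
    intro j hj
    rw [Finset.mem_range] at hj
    exact hposk j hj
  have key : ∀ (Ap Pp : ℕ), 1 ≤ Pp → Ap * Pp - d ≤ d - 1 + (Ap * (Pp - 1) + Ap) := by
    intro Ap Pp h1
    have hmm : Ap * (Pp - 1) + Ap = Ap * Pp := by
      obtain ⟨t, rfl⟩ := Nat.exists_eq_add_of_le h1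
      have ht : 1 + t - 1 = t := by omega
      rw [ht]
      ring
    omega
  have hmain2 : (2:ℤ) ^ (d - 1 + ((k ⟨d-1,hd1⟩ - 2) *
      ((∏ l ∈ Finset.range (d-1), extFun k l) - 1) + (k ⟨d-1,hd1⟩ - 2))) ≤ Stmt16Aux.cc p γ := by
    have h6 := hmain
    rw [hkl, hnum_last, hRP] at h6
    exact h6
  rw [Stmt16Aux.prod_bridge hd k]
  show (2:ℤ) ^ ((k ⟨d - 1, hd1⟩ - 2) * (∏ l ∈ Finset.range (d-1), extFun k l) - d) ≤ wt p
  calc (2:ℤ) ^ ((k ⟨d - 1, hd1⟩ - 2) * (∏ l ∈ Finset.range (d-1), extFun k l) - d)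
      ≤ 2 ^ (d - 1 + ((k ⟨d-1,hd1⟩ - 2) *
          ((∏ l ∈ Finset.range (d-1), extFun k l) - 1) + (k ⟨d-1,hd1⟩ - 2))) := by
        apply pow_le_pow_right₀ one_le_two
        exact key _ _ hP1
    _ ≤ Stmt16Aux.cc p γ := hmain2
    _ ≤ |Stmt16Aux.cc p γ| := le_abs_self _
    _ ≤ wt p := Stmt16Aux.abs_cc_le_wt p γ
end

section
/- The function f of Definition (d-dimensional GT generalization with k_i ≥ 2 for all i) has threshold degree exactly d: it is sign-representable by a degree-d integer polynomial but by no integer polynomial of degree less than d. -/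
section Helpers

lemma snakePar_succ' (k α : ℕ → ℕ) (l : ℕ) : snakePar k α (l+1) = snakeNum k α l % 2 := rfl

lemma prod_pm {d : ℕ} (g : Fin d → ℤ) (hg : ∀ i, g i = -1 ∨ g i = 0 ∨ g i = 1) :
    (∏ i, g i) = -1 ∨ (∏ i, g i) = 0 ∨ (∏ i, g i) = 1 := by
  refine Finset.prod_induction g (fun t => t = -1 ∨ t = 0 ∨ t = 1) ?_ (by norm_num)
    (fun i _ => hg i)
  rintro a b (rfl|rfl|rfl) (rfl|rfl|rfl) <;> norm_num

def skey (B d : ℕ) (k a : ℕ → ℕ) : ℕ :=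
  ∑ l ∈ Finset.range d, snakeNum k a l * B ^ (d - 1 - l)

lemma tail_lt {B : ℕ} (hB : 1 ≤ B) (u : ℕ → ℕ) :
    ∀ n s, (∀ m ∈ Finset.Ico s (s + n), u m < B) →
      ∑ m ∈ Finset.Ico s (s + n), u m * B ^ (s + n - 1 - m) < B ^ n := by
  intro n
  induction n with
  | zero => intro s _; simpa using Nat.one_le_pow 0 B (by omega)
  | succ n ih =>
    intro s hu
    have hins : Finset.Ico s (s + (n+1)) = insert s (Finset.Ico (s+1) (s+1+n)) := by
      rw [← Finset.insert_Ico_add_one_left_eq_Ico (by omega : s < s + (n+1))]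
      congr 2; omega
    rw [hins, Finset.sum_insert (by simp)]
    have he : ∀ m ∈ Finset.Ico (s+1) (s+1+n),
        u m * B ^ (s + (n+1) - 1 - m) = u m * B ^ (s + 1 + n - 1 - m) := by
      intro m hm; congr 2; omega
    rw [Finset.sum_congr rfl he]
    have h1 : ∑ m ∈ Finset.Ico (s+1) (s+1+n), u m * B ^ (s + 1 + n - 1 - m) < B ^ n := by
      apply ih
      intro m hm
      apply hu
      simp only [Finset.mem_Ico] at hm ⊢
      omega
    have h2 : u s < B := hu s (by simp)
    have h3 : s + (n+1) - 1 - s = n := by omega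
    rw [h3]
    calc u s * B ^ n + ∑ m ∈ Finset.Ico (s+1) (s+1+n), u m * B ^ (s + 1 + n - 1 - m)
        < u s * B ^ n + B ^ n := by omega
      _ = (u s + 1) * B ^ n := by ring
      _ ≤ B * B ^ n := Nat.mul_le_mul_right _ (by omega)
      _ = B ^ (n + 1) := by ring

lemma skey_lt {B d : ℕ} {κ a b : ℕ → ℕ}
    (ha : ∀ l < d, snakeNum κ a l < B)
    (h : snakeLt d κ a b) : skey B d κ a < skey B d κ b := by
  obtain ⟨l, hld, heq, hlt⟩ := h
  have hB : 1 ≤ B := by have := ha l hld; omega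
  have hsplit : ∀ c : ℕ → ℕ, ∑ m ∈ Finset.range d, snakeNum κ c m * B ^ (d - 1 - m)
      = (∑ m ∈ Finset.range l, snakeNum κ c m * B ^ (d - 1 - m))
        + snakeNum κ c l * B ^ (d - 1 - l)
        + ∑ m ∈ Finset.Ico (l+1) d, snakeNum κ c m * B ^ (d - 1 - m) := by
    intro c
    rw [Finset.range_eq_Ico, ← Finset.sum_Ico_consecutive _ (Nat.zero_le l) (le_of_lt hld),
      ← Finset.insert_Ico_add_one_left_eq_Ico hld, Finset.sum_insert (by simp), ← Finset.range_eq_Ico]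
    ring
  have hA : ∑ m ∈ Finset.range l, snakeNum κ a m * B ^ (d - 1 - m)
      = ∑ m ∈ Finset.range l, snakeNum κ b m * B ^ (d - 1 - m) :=
    Finset.sum_congr rfl fun m hm => by rw [heq m (Finset.mem_range.mp hm)]
  have hT : ∑ m ∈ Finset.Ico (l+1) d, snakeNum κ a m * B ^ (d - 1 - m) < B ^ (d - 1 - l) := by
    have h1 : l + 1 + (d - 1 - l) = d := by omega
    have := tail_lt hB (fun m => snakeNum κ a m) (d - 1 - l) (l+1) (by
      intro m hm; rw [h1] at hm; exact ha m (Finset.mem_Ico.mp hm).2)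
    rw [h1] at this
    exact this
  have hTb : 0 ≤ ∑ m ∈ Finset.Ico (l+1) d, snakeNum κ b m * B ^ (d - 1 - m) := Nat.zero_le _
  have hstep : (snakeNum κ a l + 1) * B ^ (d - 1 - l) ≤ snakeNum κ b l * B ^ (d - 1 - l) :=
    Nat.mul_le_mul_right _ (by omega)
  unfold skey
  rw [hsplit a, hsplit b, hA]
  nlinarith [hstep, hT, hTb]

lemma snake_tri {d : ℕ} {κ a b : ℕ → ℕ}
    (hab : ∃ l, a l ≠ b l) (hd : ∀ l, a l ≠ b l → l < d)
    (hbound : ∀ l < d, (1 ≤ a l ∧ a l ≤ κ l) ∧ (1 ≤ b l ∧ b l ≤ κ l)) :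
    snakeLt d κ a b ∨ snakeLt d κ b a := by
  classical
  have hl := Nat.find_spec hab
  set l := Nat.find hab with hldef
  have hmin : ∀ m < l, a m = b m := fun m hm => by
    have := Nat.find_min hab hm; simpa using this
  have hld : l < d := hd l hl
  have H : ∀ m, m ≤ l → snakePar κ a m = snakePar κ b m := by
    intro m hm
    induction m with
    | zero => rfl
    | succ n ih =>
      have h1 : snakePar κ a n = snakePar κ b n := ih (le_trans (Nat.le_succ n) hm)
      have h2 : a n = b n := hmin n (lt_of_lt_of_le (Nat.lt_succ_self n) hm)
      rw [snakePar_succ', snakePar_succ']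
      unfold snakeNum
      rw [h1, h2]
  have hnum : ∀ m < l, snakeNum κ a m = snakeNum κ b m := by
    intro m hm
    unfold snakeNum
    rw [H m hm.le, hmin m hm]
  obtain ⟨⟨ha1, ha2⟩, ⟨hb1, hb2⟩⟩ := hbound l hld
  have hnl : snakeNum κ a l ≠ snakeNum κ b l := by
    unfold snakeNum
    rw [H l le_rfl]
    split <;> omega
  rcases Nat.lt_or_ge (snakeNum κ a l) (snakeNum κ b l) with h | h
  · exact Or.inl ⟨l, hld, hnum, h⟩
  · exact Or.inr ⟨l, hld, fun m hm => (hnum m hm).symm, by omega⟩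

lemma mem_snakeK_bounds {d : ℕ} {k : Fin d → ℕ} {α : Fin d → ℕ} (h : α ∈ snakeK k) :
    ∀ l < d, 1 ≤ extFun α l ∧ extFun α l ≤ extFun k l := by
  intro l hl
  rw [snakeK, Fintype.mem_piFinset] at h
  have := h ⟨l, hl⟩
  rw [Finset.mem_Icc] at this
  simp only [extFun, dif_pos hl]
  exact this

lemma num_lt_B {d : ℕ} {k : Fin d → ℕ} {α : Fin d → ℕ} (h : α ∈ snakeK k) :
    ∀ l < d, snakeNum (extFun k) (extFun α) l < Finset.univ.sup k + 1 := by
  intro l hl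
  obtain ⟨h1, h2⟩ := mem_snakeK_bounds h l hl
  have h3 : extFun k l ≤ Finset.univ.sup k := by
    simp only [extFun, dif_pos hl]
    exact Finset.le_sup (Finset.mem_univ _)
  unfold snakeNum
  split <;> omega

lemma ext_ne {d : ℕ} {α β : Fin d → ℕ} (h : α ≠ β) : ∃ l, extFun α l ≠ extFun β l := by
  by_contra hc
  push_neg at hc
  apply h
  funext i
  have := hc i.val
  simpa only [extFun, dif_pos i.isLt] using this

lemma ext_ne_lt {d : ℕ} {α β : Fin d → ℕ} : ∀ l, extFun α l ≠ extFun β l → l < d := by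
  intro l hl
  by_contra hc
  simp only [extFun, dif_neg (by omega : ¬ l < d)] at hl
  exact hl rfl

def bxx (d : ℕ) (b : Fin d → Bool) : Fin d → ℕ → ℤ := fun i _ => if b i then 1 else 0

def byy (d : ℕ) (b : Fin d → Bool) : Fin d → ℕ → ℤ := fun i _ => if b i then 0 else 1

def sgnb {d : ℕ} (b : Fin d → Bool) : ℤ := ∏ i, (if b i then (1:ℤ) else -1)

lemma bxx01 (d : ℕ) (b : Fin d → Bool) : Bool01 (bxx d b) := fun i _ => by
  by_cases h : b i <;> simp [bxx, h]

lemma byy01 (d : ℕ) (b : Fin d → Bool) : Bool01 (byy d b) := fun i _ => by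
  by_cases h : b i <;> simp [byy, h]

lemma tProd_bxx {d : ℕ} (b : Fin d → Bool) (α : Fin d → ℕ) :
    tProd (bxx d b) (byy d b) α = sgnb b := by
  unfold tProd sgnb
  refine Finset.prod_congr rfl fun i _ => ?_
  cases h : b i <;> simp [bxx, byy, h]

lemma sgnb_pm {d : ℕ} (b : Fin d → Bool) : sgnb b = 1 ∨ sgnb b = -1 := by
  unfold sgnb
  refine Finset.prod_induction _ (fun t => t = 1 ∨ t = -1) ?_ (by norm_num) ?_
  · rintro a c (rfl|rfl) (rfl|rfl) <;> norm_num
  · intro i _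
    cases h : b i <;> simp

lemma sgnb_ne {d : ℕ} (b : Fin d → Bool) : sgnb b ≠ 0 := by
  rcases sgnb_pm b with h | h <;> rw [h] <;> norm_num

lemma sgnb_update {d : ℕ} (b : Fin d → Bool) (i₀ : Fin d) :
    sgnb (Function.update b i₀ (!b i₀)) = - sgnb b := by
  classical
  unfold sgnb
  rw [← Finset.mul_prod_erase Finset.univ _ (Finset.mem_univ i₀),
      ← Finset.mul_prod_erase Finset.univ (fun i => if b i then (1:ℤ) else -1)
        (Finset.mem_univ i₀)]
  have h1 : ∏ i ∈ Finset.univ.erase i₀, (if Function.update b i₀ (!b i₀) i then (1:ℤ) else -1)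
      = ∏ i ∈ Finset.univ.erase i₀, (if b i then (1:ℤ) else -1) :=
    Finset.prod_congr rfl fun i hi => by
      rw [Function.update_of_ne (Finset.ne_of_mem_erase hi)]
  rw [h1, Function.update_self]
  cases hb : b i₀ <;> simp

end Helpers

set_option maxHeartbeats 2000000 in
/-- The `d`-dimensional GT generalization (with all `k_i ≥ 2`) has threshold degree
exactly `d`: it has a degree-`d` threshold gate, but no threshold gate of degree `< d`. -/
theorem stmt17 (d : ℕ) (k : Fin d → ℕ) (hk : ∀ i, 2 ≤ k i)
    (f : (Fin d → ℕ → ℤ) → (Fin d → ℕ → ℤ) → ℤ) (hf : IsSnakeGT k f) :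
    (∃ p : MvPolynomial (Bool × Fin d × ℕ) ℤ, p.totalDegree ≤ d ∧ IsGateXY p f) ∧
    (∀ p : MvPolynomial (Bool × Fin d × ℕ) ℤ, IsGateXY p f → d ≤ p.totalDegree) := by
  classical
  set B := Finset.univ.sup k + 1 with hBdef
  set M : ℤ := ((snakeK k).card : ℤ) + 1 with hMdef
  have hM1 : 1 ≤ M := by
    have : (0:ℤ) ≤ ((snakeK k).card : ℤ) := Int.natCast_nonneg _
    omega
  set key : (Fin d → ℕ) → ℕ := fun α => skey B d (extFun k) (extFun α) with hkeydef
  constructor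
  · refine ⟨MvPolynomial.C 1 + ∑ α ∈ snakeK k, MvPolynomial.C (2 * M ^ key α) *
      ∏ i, (MvPolynomial.X (true, i, α i) - MvPolynomial.X (false, i, α i)), ?_, ?_⟩
    · -- degree bound
      apply le_trans (MvPolynomial.totalDegree_add _ _)
      simp only [MvPolynomial.totalDegree_C, max_le_iff]
      refine ⟨Nat.zero_le _, le_trans (MvPolynomial.totalDegree_finset_sum _ _)
        (Finset.sup_le fun α _ => ?_)⟩
      apply le_trans (MvPolynomial.totalDegree_mul _ _)
      simp only [MvPolynomial.totalDegree_C, zero_add]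
      apply le_trans (MvPolynomial.totalDegree_finset_prod _ _)
      apply le_trans (Finset.sum_le_card_nsmul _ _ 1 ?_)
      · simp
      · intro i _
        rw [sub_eq_add_neg]
        apply le_trans (MvPolynomial.totalDegree_add _ _)
        rw [MvPolynomial.totalDegree_neg, MvPolynomial.totalDegree_X,
          MvPolynomial.totalDegree_X]
        simp
    · -- gate property
      intro x y hx hy
      have heval : MvPolynomial.eval
          (fun v : Bool × Fin d × ℕ => if v.1 then x v.2.1 v.2.2 else y v.2.1 v.2.2)
          (MvPolynomial.C 1 + ∑ α ∈ snakeK k, MvPolynomial.C (2 * M ^ key α) *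
            ∏ i, (MvPolynomial.X (true, i, α i) - MvPolynomial.X (false, i, α i)))
          = 1 + ∑ α ∈ snakeK k, 2 * M ^ key α * tProd x y α := by
        simp [tProd]
      rw [heval]
      have tvals : ∀ α : Fin d → ℕ, tProd x y α = -1 ∨ tProd x y α = 0 ∨ tProd x y α = 1 := by
        intro α
        apply prod_pm
        intro i
        rcases hx i (α i) with h | h <;> rcases hy i (α i) with h' | h' <;>
          rw [h, h'] <;> norm_num
      by_cases hS : ∀ α ∈ snakeK k, tProd x y α = 0
      · rw [(hf x y hx hy).1 hS]
        have : ∑ α ∈ snakeK k, 2 * M ^ key α * tProd x y α = 0 :=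
          Finset.sum_eq_zero fun α hα => by rw [hS α hα]; ring
        rw [this]
        norm_num
      · push_neg at hS
        obtain ⟨α₀, hα₀K, hα₀⟩ := hS
        have hSne : ((snakeK k).filter fun α => tProd x y α ≠ 0).Nonempty :=
          ⟨α₀, Finset.mem_filter.mpr ⟨hα₀K, hα₀⟩⟩
        obtain ⟨A, hAmem, hAmax⟩ := Finset.exists_max_image _ key hSne
        rw [Finset.mem_filter] at hAmem
        obtain ⟨hAK, hAne⟩ := hAmem
        have hgt : ∀ β ∈ snakeK k, snakeLt d (extFun k) (extFun A) (extFun β) →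
            tProd x y β = 0 := by
          intro β hβ hlt
          by_contra hne
          have hmem : β ∈ (snakeK k).filter fun α => tProd x y α ≠ 0 :=
            Finset.mem_filter.mpr ⟨hβ, hne⟩
          have h1 : key A < key β := skey_lt (num_lt_B hAK) hlt
          have h2 := hAmax β hmem
          exact absurd h2 (not_le.mpr h1)
        have hfv := (hf x y hx hy).2 A hAK hAne hgt
        have hkeylt : ∀ β ∈ snakeK k, β ≠ A → tProd x y β ≠ 0 → key β < key A := by
          intro β hβ hne htβ
          have hb : ∀ l < d, (1 ≤ extFun β l ∧ extFun β l ≤ extFun k l) ∧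
              (1 ≤ extFun A l ∧ extFun A l ≤ extFun k l) :=
            fun l hl => ⟨mem_snakeK_bounds hβ l hl, mem_snakeK_bounds hAK l hl⟩
          rcases snake_tri (ext_ne hne) ext_ne_lt hb with h | h
          · exact skey_lt (num_lt_B hβ) h
          · exact absurd (hgt β hβ h) htβ
        rw [hfv]
        set R := ∑ β ∈ (snakeK k).erase A, 2 * M ^ key β * tProd x y β with hRdef
        have hsum : ∑ α ∈ snakeK k, 2 * M ^ key α * tProd x y α
            = 2 * M ^ key A * tProd x y A + R := (Finset.add_sum_erase _ _ hAK).symm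
        rw [hsum]
        have htA : tProd x y A = -1 ∨ tProd x y A = 1 := by
          rcases tvals A with h | h | h
          · exact Or.inl h
          · exact absurd h hAne
          · exact Or.inr h
        rcases Nat.eq_zero_or_pos (key A) with hk0 | hk1
        · have hR0 : R = 0 := Finset.sum_eq_zero fun β hβ => by
            rw [Finset.mem_erase] at hβ
            rcases eq_or_ne (tProd x y β) 0 with h0 | h0
            · rw [h0]; ring
            · have h5 := hkeylt β hβ.2 hβ.1 h0
              exact absurd (hk0 ▸ h5) (Nat.not_lt_zero _)
          rw [hR0, hk0]
          rcases htA with h | h <;> rw [h] <;> norm_num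
        · have hRb : |R| ≤ (M - 1) * (2 * M ^ (key A - 1)) := by
            apply le_trans (Finset.abs_sum_le_sum_abs _ _)
            have hterm : ∀ β ∈ (snakeK k).erase A,
                |2 * M ^ key β * tProd x y β| ≤ 2 * M ^ (key A - 1) := by
              intro β hβ
              rw [Finset.mem_erase] at hβ
              rcases eq_or_ne (tProd x y β) 0 with h0 | h0
              · rw [h0, mul_zero, abs_zero]
                positivity
              · have hkb := hkeylt β hβ.2 hβ.1 h0
                have ht1 : |tProd x y β| = 1 := by
                  rcases tvals β with h | h | h
                  · rw [h]; norm_num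
                  · exact absurd h h0
                  · rw [h]; norm_num
                rw [abs_mul, ht1, mul_one, abs_mul]
                have : |M ^ key β| = M ^ key β := abs_of_nonneg (by positivity)
                rw [this]
                have : |(2:ℤ)| = 2 := by norm_num
                rw [this]
                have : M ^ key β ≤ M ^ (key A - 1) :=
                  pow_le_pow_right₀ hM1 (Nat.le_pred_of_lt hkb)
                nlinarith
            apply le_trans (Finset.sum_le_card_nsmul _ _ _ hterm)
            rw [nsmul_eq_mul]
            refine mul_le_mul_of_nonneg_right ?_ (by positivity)
            have h1 : ((snakeK k).erase A).card = (snakeK k).card - 1 :=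
              Finset.card_erase_of_mem hAK
            have h2 : 1 ≤ (snakeK k).card := Finset.card_pos.mpr ⟨A, hAK⟩
            rw [hMdef, h1]
            push_cast [Nat.cast_sub h2]
            linarith
          have habs := abs_le.mp hRb
          have hMpow : M ^ key A = M * M ^ (key A - 1) := by
            rw [← pow_succ']
            congr 1
            exact (Nat.sub_add_cancel hk1).symm
          have hMp1 : (1:ℤ) ≤ M ^ (key A - 1) := by
            simpa using pow_le_pow_right₀ hM1 (Nat.zero_le (key A - 1))
          rcases htA with h | h <;> rw [h]
          · norm_num
            nlinarith [habs.1, habs.2]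
          · norm_num
            nlinarith [habs.1, habs.2]
  · intro p hp
    by_contra hdeg
    push_neg at hdeg
    have hd1 : 0 < d := lt_of_le_of_lt (Nat.zero_le _) hdeg
    have hKne : (snakeK k).Nonempty := ⟨fun _ => 1, by
      rw [snakeK, Fintype.mem_piFinset]
      intro i
      rw [Finset.mem_Icc]
      exact ⟨le_refl 1, le_trans one_le_two (hk i)⟩⟩
    obtain ⟨A, hAK, hAmax⟩ := Finset.exists_max_image _ key hKne
    have hfb : ∀ b : Fin d → Bool, f (bxx d b) (byy d b) = if 0 < sgnb b then 1 else 0 := by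
      intro b
      have h2 : tProd (bxx d b) (byy d b) A ≠ 0 := by rw [tProd_bxx]; exact sgnb_ne b
      have h3 : ∀ β ∈ snakeK k, snakeLt d (extFun k) (extFun A) (extFun β) →
          tProd (bxx d b) (byy d b) β = 0 := fun β hβ hlt =>
        absurd (hAmax β hβ) (not_le.mpr (skey_lt (num_lt_B hAK) hlt))
      rw [(hf (bxx d b) (byy d b) (bxx01 d b) (byy01 d b)).2 A hAK h2 h3, tProd_bxx]
    have hgate : ∀ b : Fin d → Bool, f (bxx d b) (byy d b) = 1 ↔
        0 ≤ MvPolynomial.eval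
          (fun v : Bool × Fin d × ℕ => if v.1 then bxx d b v.2.1 v.2.2 else byy d b v.2.1 v.2.2)
          p := fun b => hp (bxx d b) (byy d b) (bxx01 d b) (byy01 d b)
    have hpos : ∀ b : Fin d → Bool, sgnb b = 1 →
        0 ≤ MvPolynomial.eval
          (fun v : Bool × Fin d × ℕ => if v.1 then bxx d b v.2.1 v.2.2 else byy d b v.2.1 v.2.2)
          p := fun b h1 => (hgate b).mp (by rw [hfb b, h1]; norm_num)
    have hneg : ∀ b : Fin d → Bool, sgnb b = -1 →
        MvPolynomial.eval
          (fun v : Bool × Fin d × ℕ => if v.1 then bxx d b v.2.1 v.2.2 else byy d b v.2.1 v.2.2)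
          p < 0 := by
      intro b h1
      by_contra hc
      push_neg at hc
      have h4 := (hgate b).mpr hc
      rw [hfb b, h1] at h4
      norm_num at h4
    have hzero : ∑ b : Fin d → Bool, sgnb b * MvPolynomial.eval
        (fun v : Bool × Fin d × ℕ => if v.1 then bxx d b v.2.1 v.2.2 else byy d b v.2.1 v.2.2)
        p = 0 := by
      classical
      have hev : ∀ b : Fin d → Bool, MvPolynomial.eval
          (fun v : Bool × Fin d × ℕ => if v.1 then bxx d b v.2.1 v.2.2 else byy d b v.2.1 v.2.2)
          p = ∑ m ∈ p.support, p.coeff m * ∏ v ∈ m.support,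
            (if v.1 then bxx d b v.2.1 v.2.2 else byy d b v.2.1 v.2.2) ^ m v :=
        fun b => MvPolynomial.eval_eq _ _
      calc ∑ b : Fin d → Bool, sgnb b * MvPolynomial.eval
            (fun v : Bool × Fin d × ℕ => if v.1 then bxx d b v.2.1 v.2.2 else byy d b v.2.1 v.2.2)
            p
          = ∑ b : Fin d → Bool, ∑ m ∈ p.support, p.coeff m * (sgnb b * ∏ v ∈ m.support,
              (if v.1 then bxx d b v.2.1 v.2.2 else byy d b v.2.1 v.2.2) ^ m v) := by
            refine Finset.sum_congr rfl fun b _ => ?_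
            rw [hev b, Finset.mul_sum]
            exact Finset.sum_congr rfl fun m _ => by ring
        _ = ∑ m ∈ p.support, ∑ b : Fin d → Bool, p.coeff m * (sgnb b * ∏ v ∈ m.support,
              (if v.1 then bxx d b v.2.1 v.2.2 else byy d b v.2.1 v.2.2) ^ m v) :=
            Finset.sum_comm
        _ = 0 := by
            refine Finset.sum_eq_zero fun m hm => ?_
            rw [← Finset.mul_sum]
            have hiex : ∃ i₀ : Fin d, ∀ v ∈ m.support, v.2.1 ≠ i₀ := by
              by_contra hc
              push_neg at hc
              have himg : (Finset.univ : Finset (Fin d)) ⊆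
                  m.support.image (fun v => v.2.1) := by
                intro i _
                obtain ⟨v, hv, hvi⟩ := hc i
                exact Finset.mem_image.mpr ⟨v, hv, hvi⟩
              have h1 : d ≤ m.support.card :=
                calc d = (Finset.univ : Finset (Fin d)).card := by simp
                  _ ≤ (m.support.image (fun v => v.2.1)).card := Finset.card_le_card himg
                  _ ≤ m.support.card := Finset.card_image_le
              have h2 : m.support.card ≤ m.sum fun _ e => e := by
                rw [Finsupp.sum]
                calc m.support.card = ∑ _v ∈ m.support, 1 := by simp
                  _ ≤ ∑ v ∈ m.support, m v := Finset.sum_le_sum fun v hv =>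
                      Nat.one_le_iff_ne_zero.mpr (Finsupp.mem_support_iff.mp hv)
              have h3 := MvPolynomial.le_totalDegree hm
              omega
            obtain ⟨i₀, hi₀⟩ := hiex
            have hcancel : ∑ b : Fin d → Bool, sgnb b * ∏ v ∈ m.support,
                (if v.1 then bxx d b v.2.1 v.2.2 else byy d b v.2.1 v.2.2) ^ m v = 0 := by
              refine Finset.sum_ninvolution (fun b => Function.update b i₀ (!b i₀)) ?_ ?_
                (fun b => Finset.mem_univ _) ?_
              · intro b
                have hmon : (∏ v ∈ m.support,
                    (if v.1 then bxx d (Function.update b i₀ (!b i₀)) v.2.1 v.2.2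
                      else byy d (Function.update b i₀ (!b i₀)) v.2.1 v.2.2) ^ m v)
                    = ∏ v ∈ m.support,
                    (if v.1 then bxx d b v.2.1 v.2.2 else byy d b v.2.1 v.2.2) ^ m v := by
                  refine Finset.prod_congr rfl fun v hv => ?_
                  simp only [bxx, byy]
                  rw [Function.update_of_ne (hi₀ v hv)]
                rw [hmon, sgnb_update]
                ring
              · intro b hb heq
                have h5 := congrFun heq i₀
                simp at h5
              · intro b
                funext i
                rcases eq_or_ne i i₀ with rfl | h
                · simp
                · simp [Function.update_of_ne h]
            rw [hcancel, mul_zero]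
    have hterm : ∀ b : Fin d → Bool, 0 ≤ sgnb b * MvPolynomial.eval
        (fun v : Bool × Fin d × ℕ => if v.1 then bxx d b v.2.1 v.2.2 else byy d b v.2.1 v.2.2)
        p := by
      intro b
      rcases sgnb_pm b with h | h
      · rw [h, one_mul]; exact hpos b h
      · rw [h]; nlinarith [hneg b h]
    have hbneg : sgnb (fun i : Fin d => !(decide (i = ⟨0, hd1⟩))) = -1 := by
      classical
      unfold sgnb
      rw [← Finset.mul_prod_erase Finset.univ _ (Finset.mem_univ (⟨0, hd1⟩ : Fin d))]
      have h6 : ∏ i ∈ Finset.univ.erase (⟨0, hd1⟩ : Fin d),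
          (if !(decide (i = ⟨0, hd1⟩)) then (1:ℤ) else -1) = 1 :=
        Finset.prod_eq_one fun i hi => by simp [Finset.ne_of_mem_erase hi]
      rw [h6]
      simp
    have hstrict : 0 < sgnb (fun i : Fin d => !(decide (i = ⟨0, hd1⟩))) * MvPolynomial.eval
        (fun v : Bool × Fin d × ℕ =>
          if v.1 then bxx d (fun i : Fin d => !(decide (i = ⟨0, hd1⟩))) v.2.1 v.2.2
          else byy d (fun i : Fin d => !(decide (i = ⟨0, hd1⟩))) v.2.1 v.2.2) p := by
      rw [hbneg]
      nlinarith [hneg _ hbneg]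
    have hfin := Finset.sum_pos' (fun b _ => hterm b)
      ⟨fun i : Fin d => !(decide (i = ⟨0, hd1⟩)), Finset.mem_univ _, hstrict⟩
    rw [hzero] at hfin
    exact lt_irrefl 0 hfin
end
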